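/- arXiv:2106.07249 — 6 statements merged into one kernel-verified Lean document; each statement's English description precedes it below -/
import Mathlib

section
/- Let x ∈ {0,1}^ℕ and let X = O(x) be the subshift generated by x. Then P_{111}(W(X)) equals the set of triples (a, b, c) ∈ ℕ³ with a < b < c for which there exist natural numbers n_{def}, one for each (d, e, f) ∈ {0,1}³, such that: (1) for all d, e, f ∈ {0,1}: x[n_{def} + a] = d, x[n_{def} + b] = e, and x[n_{def} + c] = f; (2) for every i with 0 ≤ i < a, the eight values x[n_{def} + i] (d, e, f ∈ {0,1}) are all equal; (3) for every i with a < i < b, the four values x[n_{0ef} + i] (e, f ∈ {0,1}) are all equal and the four values x[n_{1ef} + i] (e, f ∈ {0,1}) are all equal; and (4) for every i with b < i < c, x[n_{de0} + i] = x[n_{de1} + i] for all d, e ∈ {0,1}. -/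
open scoped BigOperators

/-- A language is regular if it is accepted by a DFA with finitely many states. -/
def IsRegularLang {α : Type*} (L : Set (List α)) : Prop :=
  ∃ (σ : Type) (_ : Fintype σ) (M : DFA α σ), ∀ w : List α, w ∈ M.accepts ↔ w ∈ L

/-- Pad a word over `A` to length `M` by prepending the padding symbol `none`. -/
def padOne {A : Type*} (M : ℕ) (w : List A) : List (Option A) :=
  List.replicate (M - w.length) none ++ w.map some

/-- The padded form of a `d`-tuple of words over `A`, as a word over `(A ∪ {#})^d`. -/
def padTuple {A : Type*} {d : ℕ} (ws : Fin d → List A) : List (Fin d → Option A) :=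
  List.ofFn fun j : Fin (Finset.univ.sup fun i : Fin d => (ws i).length) =>
    fun i : Fin d =>
      (padOne (Finset.univ.sup fun i : Fin d => (ws i).length) (ws i)).getD j.val none

/-- An abstract numeration system over the alphabet `A`, encoded by the order isomorphism
`rep : ℕ → L ⊆ A*` enumerating its (infinite) language in increasing order. -/
structure ANS (A : Type*) where
  rep : ℕ → List A
  inj : Function.Injective rep

/-- A set `Y ⊆ ℕ^d` is `S`-recognizable if the padded representations of its members form
a regular language. -/
def ANS.Recognizable {A : Type*} (S : ANS A) {d : ℕ} (Y : Set (Fin d → ℕ)) : Prop :=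
  IsRegularLang { w : List (Fin d → Option A) | ∃ t ∈ Y, w = padTuple fun i => S.rep (t i) }

/-- An ANS is addable if the graph of addition is `S`-recognizable. -/
def ANS.Addable {A : Type*} (S : ANS A) : Prop :=
  S.Recognizable { t : Fin 3 → ℕ | t 0 + t 1 = t 2 }

/-- An ANS is comparable if the relation `≤` is `S`-recognizable. -/
def ANS.Comparable {A : Type*} (S : ANS A) : Prop :=
  S.Recognizable { t : Fin 2 → ℕ | t 0 ≤ t 1 }

/-- An ANS is regular if `ℕ` (i.e. its language) is `S`-recognizable. -/
def ANS.IsRegularANS {A : Type*} (S : ANS A) : Prop :=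
  S.Recognizable (Set.univ : Set (Fin 1 → ℕ))

/-- The unary ANS, with language `0*` ordered by length. -/
def unaryANS : ANS Unit where
  rep := fun n => List.replicate n ()
  inj := fun m n h => by simpa using congrArg List.length h

/-- `x` is `S`-automatic: some DFAO outputs `x n` on input `rep_S n`. -/
def SAutomatic {A C : Type*} (S : ANS A) (x : ℕ → C) : Prop :=
  ∃ (Q : Type) (_ : Fintype Q) (M : DFA A Q) (τ : Q → C),
    ∀ n : ℕ, τ (M.eval (S.rep n)) = x n

/-- The shift map on one-sided infinite words. -/
def shiftMap {C : Type*} (x : ℕ → C) : ℕ → C := fun n => x (n + 1)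

/-- The orbit closure of `x` (closure in the product topology over the discrete alphabet):
`y` belongs to it iff every finite prefix of `y` occurs in `x`. -/
def orbitClosure {C : Type*} (x : ℕ → C) : Set (ℕ → C) :=
  { y | ∀ n : ℕ, ∃ m : ℕ, ∀ i < n, y i = x (m + i) }

/-- A subshift: a shift-invariant subset of `C^ℕ` that is closed in the product topology
over the discrete alphabet (expressed combinatorially). -/
def IsSubshift {C : Type*} (X : Set (ℕ → C)) : Prop :=
  (∀ x ∈ X, shiftMap x ∈ X) ∧
  ∀ y : ℕ → C, (∀ n : ℕ, ∃ x ∈ X, ∀ i < n, y i = x i) → y ∈ X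

/-- The language of a set of infinite words: all finite factors of its elements. -/
def LangOf {C : Type*} (X : Set (ℕ → C)) : Set (List C) :=
  { w | ∃ x ∈ X, ∃ p : ℕ, w = List.ofFn fun i : Fin w.length => x (p + i) }

/-- A word is right special in (the language of) `X` if it has two distinct one-letter
extensions in the language of `X`. -/
def RightSpecial {C : Type*} (X : Set (ℕ → C)) (w : List C) : Prop :=
  ∃ a b : C, a ≠ b ∧ w ++ [a] ∈ LangOf X ∧ w ++ [b] ∈ LangOf X

/-- The factor complexity of `x`: the number of distinct factors of length `n`. -/
noncomputable def factorComplexity {C : Type*} (x : ℕ → C) (n : ℕ) : ℕ :=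
  Set.ncard { w : List C | ∃ p : ℕ, w = List.ofFn fun i : Fin n => x (p + i) }

/-- `T` is a strategy tree witnessing `α ∈ W(X)`: a prefix-closed set of finite words
containing the empty word, in which every word of length `i` has exactly `α i + 1`
one-letter extensions, and all whose infinite branches lie in `X`. -/
def IsStrategyTree {C : Type*} (X : Set (ℕ → C)) (α : ℕ → ℕ) (T : Set (List C)) : Prop :=
  ([] : List C) ∈ T ∧
  (∀ u v : List C, u ++ v ∈ T → u ∈ T) ∧
  (∀ w ∈ T, Set.ncard { c : C | w ++ [c] ∈ T } = α w.length + 1) ∧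
  (∀ y : ℕ → C, (∀ n : ℕ, (List.ofFn fun i : Fin n => y i) ∈ T) → y ∈ X)

/-- The winning shift of `X ⊆ C^ℕ`, a subset of `ℕ^ℕ`. -/
def winningShift {C : Type*} (X : Set (ℕ → C)) : Set (ℕ → ℕ) :=
  { α | ∃ T : Set (List C), IsStrategyTree X α T }

/-- Membership in the winning set of a set `X` of finite words, defined recursively:
`ε ∈ W(X)` iff `ε ∈ X`, and `a :: α ∈ W(X)` iff there is a set of `a + 1` letters `c`
such that `α` is in the winning set of the left quotient of `X` by `c`. -/
def winningSetMem {C : Type*} : List ℕ → Set (List C) → Prop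
  | [], X => [] ∈ X
  | a :: α, X => ∃ S : Finset C, S.card = a + 1 ∧ ∀ c ∈ S, winningSetMem α { w | c :: w ∈ X }

/-- `Σ y = m`: the sum of the letters of `y ∈ ℕ^ℕ` is finite and equals `m`. -/
def sumEq (y : ℕ → ℕ) (m : ℕ) : Prop :=
  (Function.support y).Finite ∧ ∑ᶠ i, y i = m

/-- `Y ⊆ ℕ^ℕ` has finite coding dimension: the sums `Σ y`, `y ∈ Y`, are uniformly bounded. -/
def FiniteCodingDim (Y : Set (ℕ → ℕ)) : Prop :=
  ∃ d : ℕ, ∀ y ∈ Y, ∀ F : Finset ℕ, ∑ i ∈ F, y i ≤ d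

/-- The set `{ν(y) : y ∈ Y, Σy = k} ⊆ ℕᵏ`: nondecreasing `k`-tuples `t` such that the word
whose letter at `j` is the number of occurrences of `j` in `t` belongs to `Y`. -/
def nuSet (Y : Set (ℕ → ℕ)) (k : ℕ) : Set (Fin k → ℕ) :=
  { t | Monotone t ∧ (fun j => Set.ncard { i : Fin k | t i = j }) ∈ Y }

/-- `Y ⊆ ℕ^ℕ` is weakly `S`-codable if `{ν(y) : y ∈ Y, Σy = k}` is `S`-recognizable for
every `k`. -/
def WeaklySCodable {A : Type*} (S : ANS A) (Y : Set (ℕ → ℕ)) : Prop :=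
  ∀ k : ℕ, S.Recognizable (nuSet Y k)

/-- `Y ⊆ ℕ^ℕ` is `S`-codable if it is weakly `S`-codable and has finite coding dimension. -/
def SCodable {A : Type*} (S : ANS A) (Y : Set (ℕ → ℕ)) : Prop :=
  WeaklySCodable S Y ∧ FiniteCodingDim Y

/-- `P_{111}(Y)`: strictly increasing triples `(a, b, c)` such that the word with letter `1`
exactly at positions `a`, `b`, `c` and `0` elsewhere belongs to `Y`. -/
def P111 (Y : Set (ℕ → ℕ)) : Set (Fin 3 → ℕ) :=
  { t | t 0 < t 1 ∧ t 1 < t 2 ∧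
        (fun j => if j = t 0 ∨ j = t 1 ∨ j = t 2 then 1 else 0) ∈ Y }

/-- `P_v(Y)` for a finite word `v` over `ℕ`: strictly increasing tuples `n` such that the
word with letter `v i` at position `n i` and `0` elsewhere belongs to `Y`. -/
def PvSet (v : List ℕ) (Y : Set (ℕ → ℕ)) : Set (Fin v.length → ℕ) :=
  { n | StrictMono n ∧
        (fun j => ∑ i : Fin v.length, if n i = j then v.get i else 0) ∈ Y }

/-- `X` is sofic: the set of label sequences of right-infinite paths in a finite
edge-labeled graph. -/
def IsSofic {C : Type*} (X : Set (ℕ → C)) : Prop :=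
  ∃ (V : Type) (_ : Fintype V) (E : Set (V × C × V)),
    X = { x | ∃ p : ℕ → V, ∀ n : ℕ, (p n, x n, p (n + 1)) ∈ E }

/-- The factor `x[a..b-1]` of an infinite word. -/
def segmentOf {C : Type*} (x : ℕ → C) (a b : ℕ) : List C :=
  List.ofFn fun i : Fin (b - a) => x (a + i)

/-- `U · V^ω`: infinite words that decompose as a word of `U` followed by infinitely many
nonempty words of `V`. -/
def omegaIter {C : Type*} (U V : Set (List C)) : Set (ℕ → C) :=
  { x | ∃ k : ℕ → ℕ, StrictMono k ∧ segmentOf x 0 (k 0) ∈ U ∧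
        ∀ i : ℕ, segmentOf x (k i) (k (i + 1)) ∈ V }

/-- `X ⊆ C^ℕ` is ω-regular: a finite union of sets `U · V^ω` with `U`, `V` regular. -/
def IsOmegaRegular {C : Type*} (X : Set (ℕ → C)) : Prop :=
  ∃ (n : ℕ) (U V : Fin n → Set (List C)),
    (∀ i, IsRegularLang (U i) ∧ IsRegularLang (V i)) ∧
    X = ⋃ i, omegaIter (U i) (V i)

/-- The words `p₁ = a`, `p_{k+1} = p_k bᵏ p_k` (with `a = false`, `b = true`). -/
def pWord : ℕ → List Bool
  | 0 => []
  | 1 => [false]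
  | (k + 2) => pWord (k + 1) ++ List.replicate (k + 1) true ++ pWord (k + 1)

/-- Combinatorial continuity of `φ` on `Y` for product topologies over discrete alphabets:
every finite prefix of `φ y` is determined by a finite prefix of `y`. -/
def ContOn {B C : Type*} (φ : (ℕ → B) → (ℕ → C)) (Y : Set (ℕ → B)) : Prop :=
  ∀ y ∈ Y, ∀ n : ℕ, ∃ m : ℕ, ∀ y' ∈ Y, (∀ i < m, y' i = y i) → ∀ i < n, φ y' i = φ y i

/-!
A strategy tree for the indicator of `{a, b, c}` branches into both letters exactly at depths
`a`, `b`, `c` and is a single path elsewhere. Forking a branch at these three depths yields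
eight infinite branches, which lie in `O(x)`; their prefixes of length `c + 1` occur in `x` at
positions `n_{def}`, and (1)–(4) record how the eight branches share prefixes. Conversely,
(1)–(4) say that the prefix tree of the eight words `i ↦ x (n_{def} + i)` branches exactly at
`a`, `b`, `c`, and its infinite branches lie in `O(x)` because all their prefixes are factors
of `x`.
-/

section Trees
variable {C : Type*}

def prefixWord (y : ℕ → C) (n : ℕ) : List C := List.ofFn fun i : Fin n => y i

section PrefixWord
variable {y z : ℕ → C} {n : ℕ} {w u v : List C}

@[simp] lemma length_prefixWord : (prefixWord y n).length = n := List.length_ofFn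

lemma prefixWord_succ : prefixWord y (n + 1) = prefixWord y n ++ [y n] :=
  List.ofFn_succ_last

lemma prefixWord_length_eq_iff :
    prefixWord y w.length = w ↔ ∀ i (hi : i < w.length), y i = w[i] := by
  simp [prefixWord, List.ext_get_iff]

lemma prefixWord_eq_prefixWord_iff : prefixWord y n = prefixWord z n ↔ ∀ i < n, y i = z i := by
  simp [prefixWord, List.ofFn_inj, funext_iff, Fin.forall_iff]

lemma prefixWord_length_of_eq_append (h : prefixWord y n = u ++ v) :
    prefixWord y u.length = u := by
  have hn : n = (u ++ v).length := by simpa using congrArg List.length h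
  rw [hn, prefixWord_length_eq_iff] at h
  rw [prefixWord_length_eq_iff]
  intro i hi
  rw [h i (by simp; omega), List.getElem_append_left hi]

lemma prefixWord_add (m k : ℕ) :
    prefixWord y (m + k) = prefixWord y m ++ prefixWord (fun i => y (m + i)) k := by
  induction k with
  | zero => simp [prefixWord]
  | succ k ih => rw [← Nat.add_assoc, prefixWord_succ, prefixWord_succ, ih, List.append_assoc]

end PrefixWord

def IsBranch (T : Set (List C)) (z : ℕ → C) : Prop := ∀ n, prefixWord z n ∈ T

lemma exists_isBranch_of_mem {T : Set (List C)} (hpre : ∀ u v, u ++ v ∈ T → u ∈ T)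
    (hchild : ∀ w ∈ T, ∃ c, w ++ [c] ∈ T) {w : List C} (hw : w ∈ T) :
    ∃ z, IsBranch T z ∧ prefixWord z w.length = w := by
  choose next hnext using fun u : T => hchild u u.2
  let W : ℕ → T := fun k => (fun u : T => ⟨u.1 ++ [next u], hnext u⟩)^[k] ⟨w, hw⟩
  let z : ℕ → C := fun i => if h : i < w.length then w[i] else next (W (i - w.length))
  have hzw : prefixWord z w.length = w :=
    prefixWord_length_eq_iff.2 fun i hi => dif_pos hi
  have hW : ∀ k, (W (k + 1)).1 = (W k).1 ++ [next (W k)] := fun k =>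
    congrArg Subtype.val (Function.iterate_succ_apply' _ k _)
  have hzW : ∀ k, prefixWord z (w.length + k) = (W k).1 := by
    intro k
    induction k with
    | zero => exact hzw
    | succ k ih => simp [← Nat.add_assoc, prefixWord_succ, ih, hW, z]
  refine ⟨z, fun n => hpre _ (prefixWord (fun i => z (n + i)) w.length) ?_, hzw⟩
  rw [← prefixWord_add, Nat.add_comm, hzW]
  exact (W n).2

namespace IsStrategyTree
variable {X : Set (ℕ → C)} {α : ℕ → ℕ} {T : Set (List C)}

lemma exists_append_singleton_mem (hT : IsStrategyTree X α T) {w : List C} (hw : w ∈ T) :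
    ∃ c, w ++ [c] ∈ T := by
  have h : {c | w ++ [c] ∈ T}.ncard ≠ 0 := by rw [hT.2.2.1 w hw]; omega
  exact Set.nonempty_of_ncard_ne_zero h

lemma exists_isBranch (hT : IsStrategyTree X α T) {w : List C} (hw : w ∈ T) :
    ∃ z, IsBranch T z ∧ prefixWord z w.length = w :=
  exists_isBranch_of_mem hT.2.1 (fun _ => hT.exists_append_singleton_mem) hw

lemma mem_of_isBranch (hT : IsStrategyTree X α T) {z : ℕ → C} (hz : IsBranch T z) : z ∈ X :=
  hT.2.2.2 z hz

lemma append_singleton_mem_of_eq_one {X : Set (ℕ → Bool)} {T : Set (List Bool)}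
    (hT : IsStrategyTree X α T) {w : List Bool} (hw : w ∈ T) (hα : α w.length = 1) (b : Bool) :
    w ++ [b] ∈ T := by
  have hS : {c | w ++ [c] ∈ T} = Set.univ :=
    Set.eq_of_subset_of_ncard_le (Set.subset_univ _) (by simp [hT.2.2.1 w hw, hα])
  have hb : b ∈ {c | w ++ [c] ∈ T} := hS ▸ Set.mem_univ b
  exact hb

lemma exists_isBranch_fork {X : Set (ℕ → Bool)} {T : Set (List Bool)}
    (hT : IsStrategyTree X α T) {z : ℕ → Bool} (hz : IsBranch T z) {L : ℕ} (hα : α L = 1)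
    (b : Bool) : ∃ z', IsBranch T z' ∧ (∀ i < L, z' i = z i) ∧ z' L = b := by
  have hmem := hT.append_singleton_mem_of_eq_one (hz L) (by simpa using hα) b
  obtain ⟨z', hz', hpre⟩ := hT.exists_isBranch hmem
  rw [List.length_append, length_prefixWord, List.length_singleton, prefixWord_succ] at hpre
  obtain ⟨hagree, hlast⟩ := List.append_inj' hpre rfl
  exact ⟨z', hz', prefixWord_eq_prefixWord_iff.1 hagree, List.singleton_inj.1 hlast⟩

end IsStrategyTree

section PrefixTree
variable {ι : Type*} {y : ι → ℕ → C}

def prefixTree (y : ι → ℕ → C) : Set (List C) := {w | ∃ k, prefixWord (y k) w.length = w}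

lemma mem_prefixTree_of_append {u v : List C} (h : u ++ v ∈ prefixTree y) :
    u ∈ prefixTree y :=
  let ⟨k, hk⟩ := h
  ⟨k, prefixWord_length_of_eq_append hk⟩

lemma prefixWord_append_singleton_mem_prefixTree_iff {k : ι} {L : ℕ} {c : C} :
    prefixWord (y k) L ++ [c] ∈ prefixTree y ↔ ∃ j, (∀ i < L, y j i = y k i) ∧ y j L = c := by
  simp only [prefixTree, Set.mem_ofPred_eq, List.length_append, length_prefixWord,
    List.length_singleton, prefixWord_succ]
  refine exists_congr fun j => ⟨fun h => ?_, fun ⟨hagree, hc⟩ => ?_⟩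
  · obtain ⟨hagree, hc⟩ := List.append_inj' h rfl
    exact ⟨prefixWord_eq_prefixWord_iff.1 hagree, List.singleton_inj.1 hc⟩
  · rw [prefixWord_eq_prefixWord_iff.2 hagree, hc]

lemma isStrategyTree_prefixTree [Nonempty ι] {X : Set (ℕ → C)} {α : ℕ → ℕ}
    (hX : ∀ z : ℕ → C, (∀ m, ∃ k, ∀ i < m, z i = y k i) → z ∈ X)
    (hα : ∀ k L, {c | ∃ j, (∀ i < L, y j i = y k i) ∧ y j L = c}.ncard = α L + 1) :
    IsStrategyTree X α (prefixTree y) := by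
  refine ⟨⟨Classical.arbitrary ι, rfl⟩, fun u v => mem_prefixTree_of_append, ?_, ?_⟩
  · rintro w ⟨k, hk⟩
    rw [← hk]
    simp only [length_prefixWord, prefixWord_append_singleton_mem_prefixTree_iff, hα]
  · refine fun z hz => hX z fun m => ?_
    obtain ⟨k, hk⟩ : prefixWord z m ∈ prefixTree y := hz m
    rw [length_prefixWord, prefixWord_eq_prefixWord_iff] at hk
    exact ⟨k, fun i hi => (hk i hi).symm⟩

end PrefixTree

end Trees

def IsP111Witness (x : ℕ → Bool) (a b c : ℕ) (n : Bool → Bool → Bool → ℕ) : Prop :=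
  (∀ d e f : Bool, x (n d e f + a) = d ∧ x (n d e f + b) = e ∧ x (n d e f + c) = f) ∧
  (∀ i < a, ∀ d e f d' e' f' : Bool, x (n d e f + i) = x (n d' e' f' + i)) ∧
  (∀ i : ℕ, a < i → i < b → ∀ d e f e' f' : Bool, x (n d e f + i) = x (n d e' f' + i)) ∧
  (∀ i : ℕ, b < i → i < c → ∀ d e f f' : Bool, x (n d e f + i) = x (n d e f' + i))

theorem IsStrategyTree.exists_isP111Witness {x : ℕ → Bool} {α : ℕ → ℕ} {T : Set (List Bool)}
    (hT : IsStrategyTree (orbitClosure x) α T) {a b c : ℕ} (hab : a < b) (hbc : b < c)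
    (ha : α a = 1) (hb : α b = 1) (hc : α c = 1) : ∃ n, IsP111Witness x a b c n := by
  obtain ⟨z₀, hz₀, -⟩ := hT.exists_isBranch hT.1
  choose z₁ hz₁ hz₁₀ hz₁a using hT.exists_isBranch_fork hz₀ ha
  choose z₂ hz₂ hz₂₁ hz₂b using fun d => hT.exists_isBranch_fork (hz₁ d) hb
  choose z₃ hz₃ hz₃₂ hz₃c using fun d e => hT.exists_isBranch_fork (hz₂ d e) hc
  choose n hn using fun d e f => hT.mem_of_isBranch (hz₃ d e f) (c + 1)
  have hx₂ : ∀ d e f, ∀ i < c, x (n d e f + i) = z₂ d e i := fun d e f i hi => by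
    rw [← hn d e f i (by omega), hz₃₂ d e f i hi]
  have hx₁ : ∀ d e f, ∀ i < b, x (n d e f + i) = z₁ d i := fun d e f i hi => by
    rw [hx₂ d e f i (by omega), hz₂₁ d e i hi]
  have hx₀ : ∀ d e f, ∀ i < a, x (n d e f + i) = z₀ i := fun d e f i hi => by
    rw [hx₁ d e f i (by omega), hz₁₀ d i hi]
  refine ⟨n, fun d e f => ⟨?_, ?_, ?_⟩, ?_, ?_, ?_⟩
  · rw [hx₁ d e f a hab, hz₁a]
  · rw [hx₂ d e f b hbc, hz₂b]
  · rw [← hn d e f c (by omega), hz₃c]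
  · intro i hi d e f d' e' f'
    rw [hx₀ d e f i hi, hx₀ d' e' f' i hi]
  · intro i _ hi d e f e' f'
    rw [hx₁ d e f i hi, hx₁ d e' f' i hi]
  · intro i _ hi d e f f'
    rw [hx₂ d e f i hi, hx₂ d e f' i hi]

namespace IsP111Witness
variable {x : ℕ → Bool} {a b c : ℕ} {n : Bool → Bool → Bool → ℕ}

lemma eq_of_agree (hw : IsP111Witness x a b c n) {i : ℕ} {d e f d' e' f' : Bool}
    (hd : a ≤ i → d = d') (he : b ≤ i → e = e') (hf : c ≤ i → f = f') :
    x (n d e f + i) = x (n d' e' f' + i) := by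
  obtain ⟨hpos, hbefore_a, hbefore_b, hbefore_c⟩ := hw
  rcases lt_or_ge i a with hia | hai
  · exact hbefore_a i hia ..
  obtain rfl := hd hai
  rcases hai.eq_or_lt with rfl | hai
  · rw [(hpos ..).1, (hpos ..).1]
  rcases lt_or_ge i b with hib | hbi
  · exact hbefore_b i hai hib ..
  obtain rfl := he hbi
  rcases hbi.eq_or_lt with rfl | hbi
  · rw [(hpos ..).2.1, (hpos ..).2.1]
  rcases lt_or_ge i c with hic | hci
  · exact hbefore_c i hbi hic ..
  rw [hf hci]

lemma agree_below_iff (hw : IsP111Witness x a b c n) {L : ℕ} {d e f d' e' f' : Bool} :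
    (∀ i < L, x (n d' e' f' + i) = x (n d e f + i)) ↔
      (a < L → d' = d) ∧ (b < L → e' = e) ∧ (c < L → f' = f) := by
  refine ⟨fun h => ⟨fun ha => ?_, fun hb => ?_, fun hc => ?_⟩, fun ⟨hd, he, hf⟩ i hi => ?_⟩
  · simpa only [(hw.1 ..).1] using h a ha
  · simpa only [(hw.1 ..).2.1] using h b hb
  · simpa only [(hw.1 ..).2.2] using h c hc
  · exact hw.eq_of_agree (fun _ => hd (by omega)) (fun _ => he (by omega))
      (fun _ => hf (by omega))

lemma ncard_setOf_next (hw : IsP111Witness x a b c n) (hab : a < b) (hbc : b < c)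
    (d e f : Bool) (L : ℕ) :
    {c' | ∃ d' e' f', (∀ i < L, x (n d' e' f' + i) = x (n d e f + i)) ∧
      x (n d' e' f' + L) = c'}.ncard = (if L = a ∨ L = b ∨ L = c then 1 else 0) + 1 := by
  set S : Set Bool := {c' | ∃ d' e' f', (∀ i < L, x (n d' e' f' + i) = x (n d e f + i)) ∧
      x (n d' e' f' + L) = c'}
  by_cases hL : L = a ∨ L = b ∨ L = c
  · have hS : S = Set.univ := by
      refine Set.eq_univ_of_forall fun c' => ?_
      rcases hL with rfl | rfl | rfl
      · exact ⟨c', e, f, hw.agree_below_iff.2 ⟨by omega, by omega, by omega⟩, (hw.1 ..).1⟩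
      · exact ⟨d, c', f, hw.agree_below_iff.2 ⟨fun _ => rfl, by omega, by omega⟩, (hw.1 ..).2.1⟩
      · exact ⟨d, e, c', hw.agree_below_iff.2 ⟨fun _ => rfl, fun _ => rfl, by omega⟩,
          (hw.1 ..).2.2⟩
    rw [if_pos hL, hS, Set.ncard_univ, Nat.card_eq_fintype_card, Fintype.card_bool]
  · have hS : S = {x (n d e f + L)} := by
      refine Set.eq_singleton_iff_unique_mem.2 ⟨⟨d, e, f, fun _ _ => rfl, rfl⟩, ?_⟩
      rintro _ ⟨d', e', f', hagree, rfl⟩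
      obtain ⟨hd, he, hf⟩ := hw.agree_below_iff.1 hagree
      exact hw.eq_of_agree (fun _ => hd (by omega)) (fun _ => he (by omega))
        (fun _ => hf (by omega))
    rw [if_neg hL, hS, Set.ncard_singleton]

end IsP111Witness

theorem IsP111Witness.isStrategyTree {x : ℕ → Bool} {a b c : ℕ} {n : Bool → Bool → Bool → ℕ}
    (hw : IsP111Witness x a b c n) (hab : a < b) (hbc : b < c) :
    IsStrategyTree (orbitClosure x) (fun j => if j = a ∨ j = b ∨ j = c then 1 else 0)
      (prefixTree fun p : Bool × Bool × Bool => fun i => x (n p.1 p.2.1 p.2.2 + i)) :=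
  isStrategyTree_prefixTree (fun _ hz m => let ⟨k, hk⟩ := hz m; ⟨n k.1 k.2.1 k.2.2, hk⟩)
    fun ⟨d, e, f⟩ L => by simpa only [Prod.exists] using hw.ncard_setOf_next hab hbc d e f L

/-- For `x ∈ {0,1}^ℕ` (with `0 = false`, `1 = true`) and `X = O(x)`,
the set `P_{111}(W(X))` equals the set of strictly increasing triples `(a, b, c)` for which
there exist positions `n_{def}`, `(d,e,f) ∈ {0,1}³`, satisfying conditions (1)–(4). -/
theorem stmt3 (x : ℕ → Bool) :
    P111 (winningShift (orbitClosure x)) =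
      { t : Fin 3 → ℕ | t 0 < t 1 ∧ t 1 < t 2 ∧
          ∃ n : Bool → Bool → Bool → ℕ,
            (∀ d e f : Bool,
              x (n d e f + t 0) = d ∧ x (n d e f + t 1) = e ∧ x (n d e f + t 2) = f) ∧
            (∀ i < t 0, ∀ d e f d' e' f' : Bool, x (n d e f + i) = x (n d' e' f' + i)) ∧
            (∀ i : ℕ, t 0 < i → i < t 1 →
              ∀ d e f e' f' : Bool, x (n d e f + i) = x (n d e' f' + i)) ∧
            (∀ i : ℕ, t 1 < i → i < t 2 →
              ∀ d e f f' : Bool, x (n d e f + i) = x (n d e f' + i)) } := by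
  ext t
  constructor
  · rintro ⟨h01, h12, T, hT⟩
    exact ⟨h01, h12, hT.exists_isP111Witness h01 h12 (by simp) (by simp) (by simp)⟩
  · rintro ⟨h01, h12, n, hw⟩
    exact ⟨h01, h12, _, IsP111Witness.isStrategyTree hw h01 h12⟩
end

section
/- Every addable abstract numeration system is comparable, and every comparable abstract numeration system is regular. -/
open scoped BigOperators

/-! Since `x ≤ y` iff `x + z = y` for some `z`, the padded representations of `≤` arise from
those of addition by erasing the middle component, which leaves a block of all-padding columns in
front, then stripping that block: a letter-to-letter image, a left quotient by the powers of one
letter, and an intersection with the words not starting with that letter. Dually, the padded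
representations of `ℕ` are the preimage of those of `≤` under duplicating the single component,
since `x ≤ x`. Images and left quotients by arbitrary languages preserve regularity by
Myhill–Nerode: each left quotient of the new language is determined by a set of left quotients of
the old one, and there are only finitely many of those. -/

namespace Language

variable {α β : Type*}

theorem IsRegular.preimage_map {L : Language β} (hL : L.IsRegular) (f : α → β) :
    IsRegular (List.map f ⁻¹' L : Language α) := by
  obtain ⟨σ, _, M, rfl⟩ := hL
  exact ⟨σ, inferInstance, M.comap f, DFA.accepts_comap M f⟩

theorem IsRegular.of_leftQuotient_eq {L : Language α} {K : Language β} (hL : L.IsRegular)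
    (F : Set (Language α) → Language β)
    (hK : ∀ y, ∃ S ⊆ Set.range L.leftQuotient, K.leftQuotient y = F S) : K.IsRegular := by
  refine .of_finite_range_leftQuotient <|
    (hL.finite_range_leftQuotient.finite_subsets.image F).subset ?_
  rintro _ ⟨y, rfl⟩
  obtain ⟨S, hS, hy⟩ := hK y
  exact ⟨S, hS, hy.symm⟩

theorem IsRegular.map {L : Language α} (hL : L.IsRegular) (f : α → β) :
    (Language.map f L).IsRegular := by
  refine hL.of_leftQuotient_eq (fun S => {z | ∃ l ∈ S, z ∈ Language.map f l}) fun y =>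
    ⟨L.leftQuotient '' {x | x.map f = y}, Set.image_subset_range _ _, ?_⟩
  ext z
  simp only [mem_leftQuotient, Set.mem_ofPred_eq, Set.exists_mem_image]
  change (∃ w ∈ L, w.map f = y ++ z) ↔
    ∃ x, x.map f = y ∧ ∃ z' ∈ L.leftQuotient x, z'.map f = z
  constructor
  · rintro ⟨w, hw, hwyz⟩
    obtain ⟨x, z', rfl, hx, hz'⟩ := List.map_eq_append_iff.mp hwyz
    exact ⟨x, hx, z', hw, hz'⟩
  · rintro ⟨x, rfl, z', hz', rfl⟩
    exact ⟨x ++ z', hz', List.map_append⟩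

theorem IsRegular.exists_append_mem {L : Language α} (hL : L.IsRegular) (U : Set (List α)) :
    IsRegular ({w | ∃ u ∈ U, u ++ w ∈ L} : Language α) := by
  refine hL.of_leftQuotient_eq (fun S => {z | ∃ l ∈ S, z ∈ l}) fun y =>
    ⟨(fun u => L.leftQuotient (u ++ y)) '' U, ?_, ?_⟩
  · rintro _ ⟨u, -, rfl⟩
    exact ⟨_, rfl⟩
  · ext z
    simp only [Set.exists_mem_image, mem_leftQuotient, List.append_assoc]
    exact Iff.rfl

theorem isRegular_setOf_forall_mem_head? (p : α → Prop) :
    IsRegular ({w | ∀ a ∈ w.head?, p a} : Language α) := by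
  refine .of_finite_range_leftQuotient <|
    ((Set.finite_range fun P : Prop => ({_z | P} : Language α)).insert
      ({w | ∀ a ∈ w.head?, p a} : Language α)).subset ?_
  rintro _ ⟨_ | ⟨a, x⟩, rfl⟩
  · exact Set.mem_insert _ _
  · refine Set.mem_insert_of_mem _ ⟨p a, ?_⟩
    ext z
    exact ⟨fun h b hb => by simp_all, fun h => h a rfl⟩

end Language

theorem List.eq_of_replicate_append_eq {α : Type*} {a : α} {k m : ℕ} {l l' : List α}
    (h : replicate k a ++ l = replicate m a ++ l') (hl : l.head? ≠ some a)
    (hl' : l'.head? ≠ some a) : l = l' := by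
  induction k generalizing m with
  | zero =>
    cases m with
    | zero => simpa using h
    | succ m =>
      simp only [List.replicate_zero, List.nil_append] at h
      simp [h, List.head?_replicate] at hl
  | succ k ih =>
    cases m with
    | zero =>
      simp only [List.replicate_zero, List.nil_append] at h
      simp [← h, List.head?_replicate] at hl'
    | succ m => exact ih (by simpa [List.replicate_succ] using h)

theorem List.ext_of_map_apply {ι β : Type*} {l₁ l₂ : List (ι → β)}
    (hlen : l₁.length = l₂.length) (h : ∀ i, l₁.map (· i) = l₂.map (· i)) :
    l₁ = l₂ :=
  List.ext_getElem hlen fun j h₁ h₂ => funext fun i => by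
    simpa [h₁, h₂] using congrArg (·[j]?) (h i)

section Padding

variable {A : Type*} {d : ℕ}

abbrev padWidth (ws : Fin d → List A) : ℕ :=
  Finset.univ.sup fun i => (ws i).length

theorem length_le_padWidth (ws : Fin d → List A) (i : Fin d) : (ws i).length ≤ padWidth ws :=
  Finset.le_sup (f := fun i => (ws i).length) (Finset.mem_univ i)

theorem length_padOne {M : ℕ} {w : List A} (h : w.length ≤ M) : (padOne M w).length = M := by
  simp [padOne]; omega

theorem filterMap_id_padOne (M : ℕ) (w : List A) : (padOne M w).filterMap id = w := by
  simp [padOne, List.filterMap_map]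

theorem padOne_add {k M : ℕ} {w : List A} (h : w.length ≤ M) :
    padOne (k + M) w = List.replicate k none ++ padOne M w := by
  rw [padOne, padOne, ← List.append_assoc, ← List.replicate_add]
  congr 2
  omega

theorem padOne_length_self (w : List A) : padOne w.length w = w.map some := by
  simp [padOne]

theorem length_padTuple (ws : Fin d → List A) : (padTuple ws).length = padWidth ws := by
  simp [padTuple]

theorem map_apply_padTuple (ws : Fin d → List A) (i : Fin d) :
    (padTuple ws).map (· i) = padOne (padWidth ws) (ws i) := by
  refine List.ext_getElem (by simp [length_padTuple, length_padOne (length_le_padWidth ws i)])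
    fun j h₁ h₂ => ?_
  simp [padTuple, List.getElem?_eq_getElem h₂]

theorem head?_padTuple_ne (ws : Fin d → List A) :
    ∀ c ∈ (padTuple ws).head?, c ≠ fun _ => none := by
  intro c hc hnone
  have hpos : 0 < padWidth ws := by
    rw [← length_padTuple]
    cases h : padTuple ws <;> simp_all
  obtain ⟨i, -, -⟩ := Finset.lt_sup_iff.mp hpos
  obtain ⟨i, -, hi⟩ : ∃ i ∈ Finset.univ, padWidth ws = (ws i).length :=
    Finset.exists_mem_eq_sup _ ⟨i, Finset.mem_univ i⟩ _
  have hcol := congrArg List.head? (map_apply_padTuple ws i)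
  rw [List.head?_map, Option.mem_def.mp hc, hi, padOne_length_self, List.head?_map] at hcol
  simp [hnone] at hcol

theorem map_comp_padTuple {e : ℕ} (ws : Fin d → List A) (π : Fin e → Fin d) :
    (padTuple ws).map (· ∘ π) =
      List.replicate (padWidth ws - padWidth fun i => ws (π i)) (fun _ => none) ++
        padTuple fun i => ws (π i) := by
  have hle : (padWidth fun i => ws (π i)) ≤ padWidth ws :=
    Finset.sup_le fun i _ => length_le_padWidth ws (π i)
  refine List.ext_of_map_apply (by simp [length_padTuple]; omega) fun i => ?_
  rw [List.map_append, List.map_map, List.map_replicate, map_apply_padTuple,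
    ← padOne_add (length_le_padWidth (fun i => ws (π i)) i), Nat.sub_add_cancel hle]
  exact map_apply_padTuple ws (π i)

theorem eq_of_map_apply_padTuple_eq {ws : Fin d → List A} {i j : Fin d}
    (h : (padTuple ws).map (· i) = (padTuple ws).map (· j)) : ws i = ws j := by
  rw [map_apply_padTuple, map_apply_padTuple] at h
  rw [← filterMap_id_padOne _ (ws i), h, filterMap_id_padOne]

theorem map_comp_padTuple_of_surjective {e : ℕ} (ws : Fin d → List A) {π : Fin e → Fin d}
    (hπ : π.Surjective) : (padTuple ws).map (· ∘ π) = padTuple fun i => ws (π i) := by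
  have hsup : padWidth ws = padWidth fun i => ws (π i) := by
    refine le_antisymm (Finset.sup_le fun i _ => ?_)
      (Finset.sup_le fun i _ => length_le_padWidth ws (π i))
    obtain ⟨j, rfl⟩ := hπ i
    exact length_le_padWidth (fun i => ws (π i)) j
  rw [map_comp_padTuple, hsup, Nat.sub_self, List.replicate_zero, List.nil_append]

end Padding

namespace ANS

variable {A : Type*}

def repLang (S : ANS A) {d : ℕ} (Y : Set (Fin d → ℕ)) : Language (Fin d → Option A) :=
  {w | ∃ t ∈ Y, w = padTuple fun i => S.rep (t i)}

theorem recognizable_iff (S : ANS A) {d : ℕ} (Y : Set (Fin d → ℕ)) :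
    S.Recognizable Y ↔ (S.repLang Y).IsRegular :=
  exists₃_congr fun _ _ M => (Set.ext_iff (a := M.accepts) (b := S.repLang Y)).symm

theorem repLang_le_eq (S : ANS A) :
    S.repLang {t | t 0 ≤ t 1} =
      {w | ∃ u ∈ Set.range fun k => List.replicate k fun _ => none,
          u ++ w ∈ Language.map (· ∘ (![0, 2] : Fin 2 → Fin 3))
            (S.repLang {t | t 0 + t 1 = t 2})} ⊓
        {w | ∀ c ∈ w.head?, c ≠ fun _ => none} := by
  ext w
  constructor
  · rintro ⟨t, ht, rfl⟩
    set t₃ : Fin 3 → ℕ := ![t 0, t 1 - t 0, t 1]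
    obtain ⟨k, hk⟩ : ∃ k, (padTuple fun i => S.rep (t₃ i)).map (· ∘ ![0, 2]) =
        List.replicate k (fun _ => none) ++ padTuple fun i => S.rep (t i) := by
      rw [map_comp_padTuple]
      refine ⟨_, congrArg₂ (· ++ ·) rfl (congrArg padTuple ?_)⟩
      funext i
      fin_cases i <;> rfl
    refine ⟨⟨_, ⟨k, rfl⟩, _, ⟨t₃, ?_, rfl⟩, hk⟩, head?_padTuple_ne _⟩
    change t 0 + (t 1 - t 0) = t 1
    change t 0 ≤ t 1 at ht
    omega
  · rintro ⟨⟨u, ⟨k, rfl⟩, _, ⟨t, ht, rfl⟩, hw⟩, hhead⟩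
    rw [map_comp_padTuple] at hw
    refine ⟨fun i => t ((![0, 2] : Fin 2 → Fin 3) i), ?_, ?_⟩
    · change t 0 ≤ t 2
      change t 0 + t 1 = t 2 at ht
      omega
    · exact (List.eq_of_replicate_append_eq hw (fun h => head?_padTuple_ne _ _ h rfl)
        (fun h => hhead _ h rfl)).symm

theorem repLang_univ_eq (S : ANS A) :
    S.repLang (Set.univ : Set (Fin 1 → ℕ)) =
      List.map (· ∘ fun _ : Fin 2 => (0 : Fin 1)) ⁻¹' S.repLang {t | t 0 ≤ t 1} := by
  have hsurj : (fun _ : Fin 2 => (0 : Fin 1)).Surjective := fun i => ⟨0, Subsingleton.elim _ _⟩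
  have hinj : (· ∘ fun _ : Fin 2 => (0 : Fin 1)).Injective (α := Fin 1 → Option A) :=
    fun c c' h => funext fun i => by rw [Subsingleton.elim i 0]; exact congrFun h 0
  ext w
  constructor
  · rintro ⟨t, -, rfl⟩
    exact ⟨fun _ => t 0, le_refl (t 0), map_comp_padTuple_of_surjective _ hsurj⟩
  · rintro ⟨t, -, ht⟩
    have hrep : S.rep (t 0) = S.rep (t 1) :=
      eq_of_map_apply_padTuple_eq (i := 0) (j := 1) <| by
        rw [← ht, List.map_map, List.map_map]; rfl
    refine ⟨fun _ => t 0, trivial, List.map_injective_iff.mpr hinj ?_⟩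
    rw [ht, map_comp_padTuple_of_surjective _ hsurj]
    congr 1
    funext i
    fin_cases i
    · rfl
    · exact hrep.symm

end ANS

theorem stmt4_general {A : Type} (S : ANS A) :
    (S.Addable → S.Comparable) ∧ (S.Comparable → S.IsRegularANS) := by
  simp only [ANS.Addable, ANS.Comparable, ANS.IsRegularANS, ANS.recognizable_iff]
  refine ⟨fun hadd => ?_, fun hle => ?_⟩
  · rw [ANS.repLang_le_eq]
    exact ((hadd.map _).exists_append_mem _).inf (Language.isRegular_setOf_forall_mem_head? _)
  · rw [ANS.repLang_univ_eq]
    exact hle.preimage_map _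

/-- Every addable ANS is comparable, and every comparable ANS is regular. -/
theorem stmt4 {A : Type} [Fintype A] (S : ANS A) :
    (S.Addable → S.Comparable) ∧ (S.Comparable → S.IsRegularANS) :=
  stmt4_general S
end

section
/- There exists a hereditary subshift X ⊆ {0,1}^ℕ with sublinear factor complexity (the number of length-n words in L(X) is O(n)) and infinite coding dimension, i.e., the sums Σx for x ∈ X are unbounded. -/
open scoped BigOperators

/-! The witness is the hereditary closure of the orbit closure of the indicator of the powers
of `4`; it contains that indicator, hence has infinite coding dimension. If a window of
length `n` at offset `m` meets two powers `4 ^ a < 4 ^ b`, then `3 * 4 ^ a < n`, so a factor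
with two ones is determined by `a ≤ K = log₄ (2n)`, the offset `m ≤ 4 ^ a` and a set of
exponents in `[a, K]`. There are `∑ a ≤ K, (4 ^ a + 1) 2 ^ (K + 1 - a) ≤ 8 * 4 ^ K = O(n)`
such choices. -/

open Finset

/-- The hereditary closure of the orbit closure of the indicator of `P`. -/
def hereditaryShift (P : Set ℕ) : Set (ℕ → ℕ) :=
  { x | (∀ i, x i ≤ 1) ∧ ∀ N, ∃ m, ∀ i < N, x i = 1 → i + m ∈ P }

def supportWord (n : ℕ) (S : Finset ℕ) : List ℕ :=
  List.ofFn fun i : Fin n => if (i : ℕ) ∈ S then 1 else 0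

namespace hereditaryShift

variable {P : Set ℕ}

theorem isSubshift (P : Set ℕ) : IsSubshift (hereditaryShift P) := by
  refine ⟨fun x ⟨hx01, hxP⟩ => ⟨fun i => hx01 (i + 1), fun N => ?_⟩, fun y hy => ⟨?_, ?_⟩⟩
  · obtain ⟨m, hm⟩ := hxP (N + 1)
    refine ⟨m + 1, fun i hi h1 => ?_⟩
    simpa only [Nat.add_right_comm i 1 m, Nat.add_assoc] using hm (i + 1) (by omega) h1
  · intro i
    obtain ⟨x, hx, hxy⟩ := hy (i + 1)
    exact hxy i i.lt_succ_self ▸ hx.1 i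
  · intro N
    obtain ⟨x, hx, hxy⟩ := hy N
    obtain ⟨m, hm⟩ := hx.2 N
    exact ⟨m, fun i hi h1 => hm i hi (hxy i hi ▸ h1)⟩

theorem mem_of_le {x y : ℕ → ℕ} (hy : y ∈ hereditaryShift P) (hxy : ∀ i, x i ≤ y i) :
    x ∈ hereditaryShift P := by
  refine ⟨fun i => (hxy i).trans (hy.1 i), fun N => ?_⟩
  obtain ⟨m, hm⟩ := hy.2 N
  refine ⟨m, fun i hi h1 => hm i hi ?_⟩
  have := hxy i
  have := hy.1 i
  omega

theorem indicator_mem (P : Set ℕ) : P.indicator 1 ∈ hereditaryShift P := by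
  classical
  refine ⟨fun i => ?_, fun _ => ⟨0, fun i _ h1 => ?_⟩⟩
  · by_cases hi : i ∈ P <;> simp [hi]
  · by_contra hi
    rw [Nat.add_zero] at hi
    simp [Set.indicator_of_notMem hi] at h1

theorem not_finiteCodingDim (hP : P.Infinite) : ¬ FiniteCodingDim (hereditaryShift P) := by
  rintro ⟨d, hd⟩
  obtain ⟨F, hFP, hF⟩ := hP.exists_subset_card_eq (d + 1)
  have hsum : ∑ i ∈ F, P.indicator 1 i = d + 1 := by
    rw [Finset.sum_congr rfl fun i hi => Set.indicator_of_mem (hFP hi) 1]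
    simp [hF]
  have := hd _ (indicator_mem P) F
  omega

theorem exists_eq_supportWord_of_mem_langOf {w : List ℕ} (hw : w ∈ LangOf (hereditaryShift P)) :
    ∃ S ⊆ range w.length, ∃ m, (∀ i ∈ S, i + m ∈ P) ∧ w = supportWord w.length S := by
  obtain ⟨x, ⟨hx01, hxP⟩, p, hwx⟩ := hw
  obtain ⟨m, hm⟩ := hxP (p + w.length)
  refine ⟨(range w.length).filter fun i => x (p + i) = 1, filter_subset _ _, p + m,
    fun i hi => ?_, ?_⟩
  · obtain ⟨hi, h1⟩ := mem_filter.mp hi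
    simpa only [Nat.add_assoc, Nat.add_comm i] using
      hm (p + i) (by rw [mem_range] at hi; omega) h1
  · rw [supportWord]
    conv_lhs => rw [hwx]
    congr 1
    funext i
    have := hx01 (p + i)
    simp only [mem_filter, mem_range, i.isLt, true_and]
    split_ifs <;> omega

theorem ncard_langOf_le {n : ℕ} (𝒮 : Finset (Finset ℕ))
    (h𝒮 : ∀ S ⊆ range n, ∀ m, (∀ i ∈ S, i + m ∈ P) → S ∈ 𝒮) :
    Set.ncard { w ∈ LangOf (hereditaryShift P) | w.length = n } ≤ #𝒮 := by
  calc Set.ncard { w ∈ LangOf (hereditaryShift P) | w.length = n }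
      ≤ (𝒮.image (supportWord n) : Set (List ℕ)).ncard := by
        refine Set.ncard_le_ncard ?_ (Finset.finite_toSet _)
        rintro w ⟨hw, hlen⟩
        obtain ⟨S, hS, m, hm, hwS⟩ := exists_eq_supportWord_of_mem_langOf hw
        rw [hlen] at hS hwS
        rw [hwS, mem_coe]
        exact mem_image_of_mem _ (h𝒮 S hS m hm)
    _ ≤ #𝒮 := by
        rw [Set.ncard_coe_finset]
        exact card_image_le

end hereditaryShift

theorem exists_eq_image_pow_four_sub {n m : ℕ} {S : Finset ℕ} (hS : S ⊆ range n)
    (hm : ∀ i ∈ S, i + m ∈ Set.range (4 ^ ·)) (hcard : 1 < #S) :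
    ∃ a ≤ Nat.log 4 (2 * n), m ≤ 4 ^ a ∧
      ∃ A ⊆ Icc a (Nat.log 4 (2 * n)), S = A.image (4 ^ · - m) := by
  set κ : ℕ → ℕ := fun i => Nat.log 4 (i + m)
  have hκ : ∀ i ∈ S, 4 ^ κ i = i + m := by
    intro i hi
    obtain ⟨k, hk⟩ := hm i hi
    simp only [κ, ← hk, Nat.log_pow (by norm_num : 1 < 4)]
  have hlt : ∀ i ∈ S, i < n := fun i hi => mem_range.mp (hS hi)
  have hne : S.Nonempty := card_pos.mp (by omega)
  set q := S.min' hne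
  have hq : q ∈ S := min'_mem S hne
  obtain ⟨q₂, hq₂, hq₂q⟩ := exists_mem_ne hcard q
  have hκ_mono : ∀ i ∈ S, ∀ j ∈ S, i < j → κ i < κ j := fun i hi j hj hij =>
    (pow_lt_pow_iff_right₀ (by norm_num : 1 < 4)).mp (by rw [hκ i hi, hκ j hj]; omega)
  -- `4 ^ (κ q + 1) ≤ q₂ + m < n + 4 ^ κ q`
  have hgap : 3 * 4 ^ κ q < n := by
    have h := Nat.pow_le_pow_right (by norm_num : 1 ≤ 4)
      (hκ_mono q hq q₂ hq₂ (lt_of_le_of_ne (min'_le S q₂ hq₂) (Ne.symm hq₂q)))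
    rw [pow_succ, hκ q hq, hκ q₂ hq₂] at h
    have := hκ q hq
    have := hlt q₂ hq₂
    omega
  have hκ_le : ∀ i ∈ S, κ i ≤ Nat.log 4 (2 * n) := by
    intro i hi
    refine Nat.le_log_of_pow_le (by norm_num) ?_
    have := hκ q hq
    have := hκ i hi
    have := hlt i hi
    omega
  refine ⟨κ q, hκ_le q hq, by rw [hκ q hq]; omega, S.image κ, fun k hk => ?_, ?_⟩
  · obtain ⟨i, hi, rfl⟩ := mem_image.mp hk
    exact mem_Icc.mpr ⟨Nat.log_mono_right (Nat.add_le_add_right (min'_le S i hi) m), hκ_le i hi⟩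
  · rw [image_image]
    conv_lhs => rw [← image_id (s := S)]
    refine image_congr fun i hi => ?_
    simp only [Function.comp, hκ i hi, Nat.add_sub_cancel, id]

def powFourSupports (n K : ℕ) : Finset (Finset ℕ) :=
  insert ∅ ((range n).image singleton) ∪
    (range (K + 1)).biUnion fun a =>
      (range (4 ^ a + 1) ×ˢ (Icc a K).powerset).image fun mA => mA.2.image (4 ^ · - mA.1)

theorem mem_powFourSupports {n m : ℕ} {S : Finset ℕ} (hS : S ⊆ range n)
    (hm : ∀ i ∈ S, i + m ∈ Set.range (4 ^ ·)) : S ∈ powFourSupports n (Nat.log 4 (2 * n)) := by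
  rw [powFourSupports, mem_union]
  rcases le_or_gt #S 1 with hcard | hcard
  · left
    rcases card_le_one_iff_subset_singleton.mp hcard with ⟨q, hq⟩
    rcases subset_singleton_iff.mp hq with rfl | rfl
    · exact mem_insert_self _ _
    · exact mem_insert_of_mem (mem_image_of_mem _ (hS (mem_singleton_self q)))
  · right
    obtain ⟨a, ha, ham, A, hA, rfl⟩ := exists_eq_image_pow_four_sub hS hm hcard
    exact mem_biUnion.mpr ⟨a, mem_range.mpr (by omega),
      mem_image.mpr ⟨(m, A), mem_product.mpr ⟨mem_range.mpr (by omega), mem_powerset.mpr hA⟩, rfl⟩⟩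

theorem sum_four_pow_mul_two_pow_le (K : ℕ) :
    ∑ a ∈ range (K + 1), (4 ^ a + 1) * 2 ^ (K + 1 - a) ≤ 8 * 4 ^ K := by
  induction K with
  | zero => simp
  | succ K ih =>
    have hdouble : ∀ a ∈ range (K + 1),
        (4 ^ a + 1) * 2 ^ (K + 1 + 1 - a) = 2 * ((4 ^ a + 1) * 2 ^ (K + 1 - a)) := by
      intro a ha
      rw [Nat.sub_add_comm (by rw [mem_range] at ha; omega), pow_succ]
      ring
    rw [sum_range_succ, sum_congr rfl hdouble, ← mul_sum, Nat.add_sub_cancel_left, pow_one,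
      pow_succ]
    have := Nat.one_le_pow K 4 (by norm_num)
    omega

theorem card_powFourSupports_le (n K : ℕ) : #(powFourSupports n K) ≤ n + 1 + 8 * 4 ^ K := by
  refine (card_union_le _ _).trans (add_le_add ?_ ?_)
  · exact (card_insert_le _ _).trans (by simpa using card_image_le (s := range n))
  · refine card_biUnion_le.trans ((sum_le_sum fun a _ => ?_).trans (sum_four_pow_mul_two_pow_le K))
    refine card_image_le.trans ?_
    rw [card_product, card_range, card_powerset, Nat.card_Icc]

theorem ncard_langOf_hereditaryShift_powFour_le (n : ℕ) :
    Set.ncard { w ∈ LangOf (hereditaryShift (Set.range (4 ^ ·))) | w.length = n } ≤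
      17 * n + 17 := by
  have hK : 4 ^ Nat.log 4 (2 * n) ≤ 2 * n + 1 := by
    rcases Nat.eq_zero_or_pos n with rfl | hn
    · simp
    · exact (Nat.pow_log_le_self 4 (by omega)).trans (Nat.le_succ _)
  calc _ ≤ #(powFourSupports n (Nat.log 4 (2 * n))) :=
        hereditaryShift.ncard_langOf_le _ fun _ hS _ hm => mem_powFourSupports hS hm
    _ ≤ n + 1 + 8 * 4 ^ Nat.log 4 (2 * n) := card_powFourSupports_le _ _
    _ ≤ 17 * n + 17 := by omega

/-- There exists a hereditary subshift `X ⊆ {0,1}^ℕ` with sublinear factor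
complexity and infinite coding dimension. -/
theorem stmt7 :
    ∃ X : Set (ℕ → ℕ),
      IsSubshift X ∧
      (∀ x ∈ X, ∀ n : ℕ, x n ≤ 1) ∧
      (∀ y ∈ X, ∀ x : ℕ → ℕ, (∀ i, x i ≤ y i) → x ∈ X) ∧
      (∃ c : ℕ, ∀ n : ℕ, Set.ncard { w ∈ LangOf X | w.length = n } ≤ c * n + c) ∧
      ¬ FiniteCodingDim X :=
  ⟨hereditaryShift (Set.range (4 ^ ·)), hereditaryShift.isSubshift _, fun _ hx => hx.1,
    fun _ hy _ hxy => hereditaryShift.mem_of_le hy hxy,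
    ⟨17, ncard_langOf_hereditaryShift_powFour_le⟩,
    hereditaryShift.not_finiteCodingDim
      (Set.infinite_range_of_injective (Nat.pow_right_injective (by norm_num)))⟩
end

section
/- Let σ be the substitution a ↦ abab, b ↦ b on the alphabet {a, b}, let z be its unique infinite fixed point beginning with a (equivalently z = lim_k p_k, where p₁ = a and p_{k+1} = p_k bᵏ p_k), and let Z = O(z). The right special factors in L(Z) that end with a b^k (for k ≥ 1) are exactly the nonempty suffixes of the word bᵏ p_k bᵏ that end with a bᵏ. -/
open scoped BigOperators

namespace Stmt9

lemma pWord_succ (j : ℕ) (hj : 1 ≤ j) :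
    pWord (j + 1) = pWord j ++ List.replicate j true ++ pWord j := by
  obtain ⟨j, rfl⟩ : ∃ i, j = i + 1 := ⟨j - 1, by omega⟩
  rfl

lemma pWord_head (j : ℕ) (hj : 1 ≤ j) : ∃ r, pWord j = false :: r := by
  induction j with
  | zero => omega
  | succ n ih =>
    rcases Nat.eq_or_lt_of_le hj with h | h
    · exact ⟨[], by simp [← h, pWord]⟩
    · obtain ⟨r, hr⟩ := ih (by omega)
      exact ⟨r ++ List.replicate n true ++ pWord n, by
        rw [pWord_succ n (by omega), hr]; simp⟩

lemma pWord_last (j : ℕ) (hj : 1 ≤ j) : ∃ u, pWord j = u ++ [false] := by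
  induction j with
  | zero => omega
  | succ n ih =>
    rcases Nat.eq_or_lt_of_le hj with h | h
    · exact ⟨[], by simp [← h, pWord]⟩
    · obtain ⟨u, hu⟩ := ih (by omega)
      exact ⟨pWord n ++ List.replicate n true ++ u, by
        rw [pWord_succ n (by omega), hu]; simp⟩

lemma pWord_len_pos (j : ℕ) (hj : 1 ≤ j) : 1 ≤ (pWord j).length := by
  obtain ⟨r, hr⟩ := pWord_head j hj; rw [hr]; simp

lemma pWord_len_succ (j : ℕ) (hj : 1 ≤ j) :
    (pWord (j + 1)).length = 2 * (pWord j).length + j := by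
  rw [pWord_succ j hj]; simp; ring

lemma pWord_len_ge (j : ℕ) : j ≤ (pWord j).length := by
  induction j with
  | zero => simp
  | succ n ih =>
    rcases Nat.eq_zero_or_pos n with h | h
    · subst h; simp [pWord]
    · rw [pWord_len_succ n h]
      have := pWord_len_pos n h
      omega

lemma pWord_len_mono {j j' : ℕ} (hj : 1 ≤ j) (h : j ≤ j') :
    (pWord j).length ≤ (pWord j').length := by
  induction j' with
  | zero => omega
  | succ n ih =>
    rcases Nat.eq_or_lt_of_le h with h' | h'
    · rw [h']
    · have h2 : j ≤ n := by omega
      have := ih h2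
      have := pWord_len_succ n (by omega)
      omega

lemma pWord_len_lt {j j' : ℕ} (hj : 1 ≤ j) (h : j < j') :
    (pWord j).length < (pWord j').length := by
  have h1 : (pWord (j+1)).length = 2 * (pWord j).length + j := pWord_len_succ j hj
  have h2 := pWord_len_mono (by omega : 1 ≤ j + 1) h
  have := pWord_len_pos j hj
  omega


section Z
variable {z : ℕ → Bool}
  (hz : ∀ k : ℕ, ∀ i < (pWord k).length, z i = (pWord k).getD i false)

include hz

/-- letters of any decomposition of a `pWord` prefix of `z`. -/
lemma occZ {j : ℕ} {u v t : List Bool} (h : pWord j = u ++ v ++ t) :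
    ∀ i < v.length, z (u.length + i) = v.getD i false := by
  intro i hi
  have hlen : u.length + i < (pWord j).length := by rw [h]; simp; omega
  rw [hz j _ hlen, h, List.append_assoc, List.getD_append_right _ _ _ _ (by omega)]
  have he : u.length + i - u.length = i := by omega
  rw [he, List.getD_append _ _ _ _ hi]

lemma runZ {j : ℕ} (hj : 1 ≤ j) {i : ℕ} (hi : i < j) :
    z ((pWord j).length + i) = true := by
  have h := pWord_succ j hj
  have := occZ hz (by rw [h] : pWord (j+1) = pWord j ++ List.replicate j true ++ pWord j) i
    (by simpa using hi)
  rw [this] ; simp [List.getD, List.getElem?_replicate, hi]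

lemma shiftZ {j : ℕ} (hj : 1 ≤ j) {i : ℕ} (hi : i < (pWord j).length) :
    z ((pWord j).length + j + i) = z i := by
  have h : pWord (j+1) = (pWord j ++ List.replicate j true) ++ pWord j ++ [] := by
    rw [pWord_succ j hj]; simp
  have h1 := occZ hz h i (by simpa using hi)
  simp only [List.length_append, List.length_replicate] at h1
  rw [h1, hz j i hi]

lemma lastZ {j : ℕ} (hj : 1 ≤ j) : z ((pWord j).length - 1) = false := by
  obtain ⟨u, hu⟩ := pWord_last j hj
  have h1 := occZ hz (by simp [hu] : pWord j = u ++ [false] ++ []) 0 (by simp)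
  have : (pWord j).length = u.length + 1 := by rw [hu]; simp
  simpa [this] using h1

lemma headZ {j : ℕ} (hj : 1 ≤ j) : z 0 = false := by
  obtain ⟨r, hr⟩ := pWord_head j hj
  have h1 := occZ hz (by simp [hr] : pWord j = [] ++ [false] ++ r) 0 (by simp)
  simpa using h1

lemma prefZ {j : ℕ} {i : ℕ} (hi : i < (pWord j).length) :
    z i = (pWord j).getD i false := hz j i hi

/-- no occurrence of `bᵏ` inside `p_j` for `j ≤ k`. -/
lemma noBk {k : ℕ} (hk : 1 ≤ k) :
    ∀ j ≤ k, ∀ p, p + k ≤ (pWord j).length → ∃ i < k, z (p + i) = false := by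
  intro j
  induction j with
  | zero => intro _ p hp; simp [pWord] at hp; omega
  | succ n ih =>
    intro hjk p hp
    rcases Nat.eq_zero_or_pos n with hn | hn
    · subst hn
      simp [pWord] at hp
      have hp0 : p = 0 := by omega
      subst hp0
      exact ⟨0, by omega, by simpa using headZ hz hk⟩
    · have hL := pWord_len_succ n hn
      set L := (pWord n).length with hLdef
      have hLpos := pWord_len_pos n hn
      by_cases h1 : p + k ≤ L
      · exact ih (by omega) p h1
      · by_cases h2 : p < L
        · -- window contains position L - 1, which is `a`
          refine ⟨L - 1 - p, by omega, ?_⟩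
          have : p + (L - 1 - p) = L - 1 := by omega
          rw [this]
          have := lastZ hz hn
          simpa [hLdef] using this
        · by_cases h3 : p < L + n
          · -- window contains position L + n  (start of second copy)
            refine ⟨L + n - p, by omega, ?_⟩
            have he : p + (L + n - p) = L + n + 0 := by omega
            rw [he, shiftZ hz hn (by omega)]
            exact headZ hz hn
          · -- window inside second copy
            obtain ⟨i, hi, hif⟩ := ih (by omega) (p - L - n) (by omega)
            refine ⟨i, hi, ?_⟩
            have he : p + i = L + n + (p - L - n + i) := by omega
            rw [he, shiftZ hz hn (by omega)]
            exact hif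

end Z

lemma repD {n i : ℕ} (h : i < n) : (List.replicate n true).getD i false = true := by
  simp [List.getD, List.getElem?_replicate, h]

lemma BkD_lt {k i : ℕ} (h : i < k) :
    (List.replicate k true ++ pWord k ++ List.replicate k true).getD i false = true := by
  rw [List.getD_append _ _ _ _ (by simp; omega), List.getD_append _ _ _ _ (by simp; omega)]
  exact repD h

lemma BkD_mid {k i : ℕ} (h1 : k ≤ i) (h2 : i < k + (pWord k).length) :
    (List.replicate k true ++ pWord k ++ List.replicate k true).getD i false
      = (pWord k).getD (i - k) false := by
  rw [List.getD_append _ _ _ _ (by simp; omega),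
    List.getD_append_right _ _ _ _ (by simp; omega)]
  simp

lemma BkD_hi {k i : ℕ} (h1 : k + (pWord k).length ≤ i) (h2 : i < (pWord k).length + 2 * k) :
    (List.replicate k true ++ pWord k ++ List.replicate k true).getD i false = true := by
  rw [List.getD_append_right _ _ _ _ (by simp; omega)]
  exact repD (by simp; omega)

/-- suffix structure: `a bᵏ p_k` is a suffix of `p_{k+m}` for `m ≥ 1`. -/
lemma sufA {k : ℕ} (hk : 1 ≤ k) :
    ∀ m, 1 ≤ m → ∃ u, pWord (k + m)
      = u ++ ([false] ++ List.replicate k true ++ pWord k) := by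
  intro m
  induction m with
  | zero => omega
  | succ n ih =>
    intro _
    rcases Nat.eq_zero_or_pos n with hn | hn
    · subst hn
      obtain ⟨u, hu⟩ := pWord_last k hk
      refine ⟨u, ?_⟩
      rw [pWord_succ k hk, hu]
      simp
    · obtain ⟨u, hu⟩ := ih hn
      refine ⟨pWord (k+n) ++ List.replicate (k+n) true ++ u, ?_⟩
      rw [show k + (n+1) = (k+n) + 1 by omega, pWord_succ (k+n) (by omega), hu]
      simp

section M

variable {z : ℕ → Bool}
  (hz : ∀ k : ℕ, ∀ i < (pWord k).length, z i = (pWord k).getD i false)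

include hz

theorem master {k : ℕ} (hk : 1 ≤ k) :
    ∀ m p, p + k < (pWord (k + m)).length → z p = false →
      (∀ i, 1 ≤ i → i ≤ k → z (p + i) = true) →
      ((p + 1 = (pWord k).length ∨
        ((pWord k).length + 2 * k ≤ p + k ∧
         ∀ i < (pWord k).length + 2 * k,
           z (p + k + 1 - ((pWord k).length + 2 * k) + i)
             = (List.replicate k true ++ pWord k ++ List.replicate k true).getD i false))
       ∧ (z (p + k + 1) = false ↔
           (p + 1 = (pWord k).length ∨
             z (p + k - ((pWord k).length + 2 * k)) = true))) := by
  set Lk := (pWord k).length with hLkdef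
  have hLkpos : 1 ≤ Lk := pWord_len_pos k hk
  have hLk1 : (pWord (k + 1)).length = 2 * Lk + k := pWord_len_succ k hk
  intro m
  induction m with
  | zero =>
    intro p hp _ hpb
    exfalso
    obtain ⟨i, hi, hif⟩ := noBk hz hk k le_rfl (p + 1)
      (by simp only [Nat.add_zero] at hp; omega)
    have := hpb (1 + i) (by omega) (by omega)
    rw [show p + (1 + i) = p + 1 + i by omega] at this
    rw [this] at hif; exact Bool.noConfusion hif
  | succ m ih =>
    intro p hp hpa hpb
    have hkm : 1 ≤ k + m := by omega
    have hL1 : (pWord (k + m + 1)).length = 2 * (pWord (k + m)).length + (k + m) :=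
      pWord_len_succ _ hkm
    set L := (pWord (k + m)).length with hLdef
    have hLLk : Lk ≤ L := pWord_len_mono hk (by omega)
    rw [show k + (m + 1) = k + m + 1 by omega] at hp
    rw [hL1] at hp
    by_cases hA : p + k < L
    · exact ih p hA hpa hpb
    · by_cases hB : p < L
      · -- p = L - 1 : occurrence at the end of the first copy
        have hpL : p + 1 = L := by
          by_contra hne
          have h1 := hpb (L - 1 - p) (by omega) (by omega)
          rw [show p + (L - 1 - p) = L - 1 by omega, lastZ hz hkm] at h1
          exact Bool.noConfusion h1
        rcases Nat.eq_zero_or_pos m with hm | hm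
        · -- m = 0 : first block
          have hLeq : L = Lk := by simp [hLdef, hLkdef, hm]
          obtain ⟨r, hr⟩ := pWord_head k hk
          have hocc := occZ hz
            (show pWord (k + 1) = (pWord k ++ List.replicate k true) ++ [false] ++ r by
              rw [pWord_succ k hk, hr]; simp) 0 (by simp)
          simp only [List.length_append, List.length_replicate, Nat.add_zero] at hocc
          constructor
          · left; omega
          · rw [show p + k + 1 = Lk + k by omega]
            rw [← hLkdef] at hocc
            simp [hocc]
            omega
        · -- m ≥ 1 : block 2^m, full B occurs on the left
          obtain ⟨u, hu⟩ := sufA hk m hm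
          have hulen : L = u.length + (1 + k + Lk) := by
            rw [hLdef, hu]; simp; omega
          have hLge : Lk + k + 1 ≤ L := by
            have := pWord_len_mono (show 1 ≤ k + 1 by omega) (show k + 1 ≤ k + m by omega)
            omega
          have hoccu := occZ hz (show pWord (k + m)
              = u ++ ([false] ++ List.replicate k true ++ pWord k) ++ [] by rw [hu]; simp)
          simp only [List.length_append, List.length_replicate, List.length_cons,
            List.length_nil] at hoccu
          constructor
          · right
            refine ⟨by omega, ?_⟩
            intro i hi
            by_cases hik : i < k
            · have h1 := hoccu (1 + i) (by simp; omega)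
              rw [show p + k + 1 - (Lk + 2 * k) + i = u.length + (1 + i) by omega, h1,
                BkD_lt hik,
                List.getD_append _ _ _ _ (by simp; omega),
                List.getD_append_right _ _ _ _ (by simp)]
              exact repD (by simp; omega)
            · by_cases hik2 : i < k + Lk
              · have h1 := hoccu (1 + i) (by simp; omega)
                rw [show p + k + 1 - (Lk + 2 * k) + i = u.length + (1 + i) by omega, h1,
                  BkD_mid (by omega) (by omega)]
                rw [List.getD_append_right _ _ _ _ (by simp; omega)]
                congr 1
                simp; omega
              · have h1 := hpb (i - (k + Lk) + 1) (by omega) (by omega)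
                rw [show p + k + 1 - (Lk + 2 * k) + i = p + (i - (k + Lk) + 1) by omega, h1,
                  BkD_hi (by omega) (by omega)]
          · have hlhs : z (p + k + 1) = true := by
              have := runZ hz hkm (show k < k + m by omega)
              rw [← hLdef] at this
              rw [show p + k + 1 = L + k by omega]
              exact this
            have hrhs : z (p + k - (Lk + 2 * k)) = false := by
              have h1 := hoccu 0 (by simp)
              rw [show p + k - (Lk + 2 * k) = u.length + 0 by omega, h1]
              simp
            have hne : ¬ (p + 1 = Lk) := by
              have := pWord_len_lt hk (show k < k + m by omega)
              omega
            rw [hlhs, hrhs]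
            simp [hne]
      · -- p ≥ L
        by_cases hC : p < L + (k + m)
        · exfalso
          have := runZ hz hkm (show p - L < k + m by omega)
          rw [← hLdef, show L + (p - L) = p by omega, hpa] at this
          exact Bool.noConfusion this
        · -- occurrence in the second copy
          set q := p - (L + (k + m)) with hq
          have hshift : ∀ i, i < L → z (L + (k + m) + i) = z i := by
            intro i hi
            have := shiftZ hz hkm (show i < L from hi)
            rwa [← hLdef] at this
          have hqk : q + k < L := by omega
          have hqa : z q = false := by
            rw [← hshift q (by omega), show L + (k + m) + q = p by omega]; exact hpa
          have hqb : ∀ i, 1 ≤ i → i ≤ k → z (q + i) = true := by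
            intro i h1 h2
            rw [← hshift (q + i) (by omega), show L + (k + m) + (q + i) = p + i by omega]
            exact hpb i h1 h2
          obtain ⟨ihc1, ihc2⟩ := ih q hqk hqa hqb
          have hpne : ¬ (p + 1 = Lk) := by omega
          by_cases hfirst : q + 1 = Lk
          · -- first block of the second copy
            have hm1 : 1 ≤ m := by
              rcases Nat.eq_zero_or_pos m with h0 | h0
              · exfalso
                have : L = Lk := by simp [hLdef, hLkdef, h0]
                omega
              · exact h0
            have hLge : 2 * Lk + k ≤ L := by
              have := pWord_len_mono (show 1 ≤ k + 1 by omega) (show k + 1 ≤ k + m by omega)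
              omega
            constructor
            · right
              refine ⟨by omega, ?_⟩
              intro i hi
              by_cases hik : i < k
              · have := runZ hz hkm (show m + i < k + m by omega)
                rw [← hLdef, show L + (m + i) = L + m + i by omega] at this
                rw [show p + k + 1 - (Lk + 2 * k) + i = L + m + i by omega, this, BkD_lt hik]
              · by_cases hik2 : i < k + Lk
                · have h1 := hshift (i - k) (by omega)
                  rw [show p + k + 1 - (Lk + 2 * k) + i = L + (k + m) + (i - k) by omega, h1,
                    prefZ hz (show i - k < (pWord k).length by omega), BkD_mid (by omega) (by omega)]
                · have h1 := hpb (i - (k + Lk) + 1) (by omega) (by omega)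
                  rw [show p + k + 1 - (Lk + 2 * k) + i = p + (i - (k + Lk) + 1) by omega, h1,
                    BkD_hi (by omega) (by omega)]
            · have hlhs : z (p + k + 1) = z (q + k + 1) := by
                rw [← hshift (q + k + 1) (by omega), show L + (k + m) + (q + k + 1) = p + k + 1 by omega]
              have hql : z (q + k + 1) = false := ihc2.mpr (Or.inl hfirst)
              have hrhs : z (p + k - (Lk + 2 * k)) = true := by
                have := runZ hz hkm (show m - 1 < k + m by omega)
                rw [← hLdef, show L + (m - 1) = p + k - (Lk + 2 * k) by omega] at this
                exact this
              rw [hlhs, hql, hrhs]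
              simp
          · -- generic block of the second copy
            have hc1 : Lk + 2 * k ≤ q + k ∧ ∀ i < Lk + 2 * k,
                z (q + k + 1 - (Lk + 2 * k) + i)
                  = (List.replicate k true ++ pWord k ++ List.replicate k true).getD i false := by
              rcases ihc1 with h | h
              · exact absurd h hfirst
              · exact h
            obtain ⟨hge, hslice⟩ := hc1
            constructor
            · right
              refine ⟨by omega, ?_⟩
              intro i hi
              have h1 := hshift (q + k + 1 - (Lk + 2 * k) + i) (by omega)
              rw [show p + k + 1 - (Lk + 2 * k) + i
                  = L + (k + m) + (q + k + 1 - (Lk + 2 * k) + i) by omega, h1]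
              exact hslice i hi
            · have hlhs : z (p + k + 1) = z (q + k + 1) := by
                by_cases hin : q + k + 1 < L
                · rw [← hshift (q + k + 1) hin,
                    show L + (k + m) + (q + k + 1) = p + k + 1 by omega]
                · have hqL : q + k + 1 = L := by omega
                  have h1 := runZ hz (show 1 ≤ k + m + 1 by omega) (show 0 < k + m + 1 by omega)
                  rw [hL1, show 2 * L + (k + m) + 0 = p + k + 1 by omega] at h1
                  have h2 := runZ hz hkm (show 0 < k + m by omega)
                  rw [← hLdef, Nat.add_zero, ← hqL] at h2
                  rw [h1, h2]
              have hrhs : z (p + k - (Lk + 2 * k)) = z (q + k - (Lk + 2 * k)) := by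
                rw [← hshift (q + k - (Lk + 2 * k)) (by omega),
                  show L + (k + m) + (q + k - (Lk + 2 * k)) = p + k - (Lk + 2 * k) by omega]
              rw [hlhs, hrhs]
              simp only [hpne, hfirst, false_or] at ihc2 ⊢
              exact ihc2

end M
end Stmt9

namespace Stmt9

lemma sufExt (z : ℕ → Bool) {v w : List Bool} {s q : ℕ}
    (hw : ∀ i < w.length, w.getD i false = z (q + i))
    (hv : ∀ i < v.length, v.getD i false = z (s + i))
    (hsq : s ≤ q) (he : q + w.length = s + v.length) : w <:+ v := by
  have hlw : w.length ≤ v.length := by omega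
  have hmain : w = v.drop (v.length - w.length) := by
    apply List.ext_getElem (by simp; omega)
    intro i h1 h2
    have e1 := hw i h1
    have e2 := hv (v.length - w.length + i) (by omega)
    rw [List.getD_eq_getElem w false h1] at e1
    rw [List.getD_eq_getElem v false (by omega)] at e2
    rw [List.getElem_drop, e2]
    rw [e1]
    congr 1
    omega
  rw [hmain]
  exact List.drop_suffix _ _

section Z2
variable {z : ℕ → Bool}
  (hz : ∀ k : ℕ, ∀ i < (pWord k).length, z i = (pWord k).getD i false)

lemma z_mem_orbit : z ∈ orbitClosure z :=
  fun _ => ⟨0, fun i _ => by rw [Nat.zero_add]⟩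

include hz

lemma memLang {j : ℕ} {u v t : List Bool} (h : pWord j = u ++ v ++ t) :
    v ∈ LangOf (orbitClosure z) := by
  refine ⟨z, z_mem_orbit, u.length, ?_⟩
  apply List.ext_getElem (by simp)
  intro i h1 h2
  simp only [List.getElem_ofFn]
  have h3 := occZ hz h i h1
  rw [List.getD_eq_getElem v false h1] at h3
  exact h3.symm

lemma occOfMem {v : List Bool} (h : v ∈ LangOf (orbitClosure z)) :
    ∃ q, ∀ i < v.length, z (q + i) = v.getD i false := by
  obtain ⟨x, hx, p, hvx⟩ := h
  obtain ⟨n0, hn0⟩ := hx (p + v.length)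
  refine ⟨n0 + p, fun i hi => ?_⟩
  have h1 : v.getD i false = x (p + i) := by
    have h2 := congrArg (fun l => l.getD i false) hvx
    rw [h2, List.getD_eq_getElem _ false (by simpa using hi), List.getElem_ofFn]
  rw [h1, hn0 (p + i) (by omega)]
  congr 1
  omega

end Z2
end Stmt9

open Stmt9 in
theorem stmt9_aux (z : ℕ → Bool)
    (hz : ∀ k : ℕ, ∀ i < (pWord k).length, z i = (pWord k).getD i false)
    (k : ℕ) (hk : 1 ≤ k) (w : List Bool) :
    (RightSpecial (orbitClosure z) w ∧ (false :: List.replicate k true) <:+ w) ↔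
    (w ≠ [] ∧ w <:+ (List.replicate k true ++ pWord k ++ List.replicate k true) ∧
      (false :: List.replicate k true) <:+ w) := by
  set Lk := (pWord k).length with hLkdef
  have hLkpos : 1 ≤ Lk := pWord_len_pos k hk
  constructor
  · rintro ⟨⟨c1, c2, hcne, h1, h2⟩, hab⟩
    obtain ⟨hwa, hwb⟩ : (w ++ [false]) ∈ LangOf (orbitClosure z) ∧
        (w ++ [true]) ∈ LangOf (orbitClosure z) := by
      cases c1 <;> cases c2
      · exact absurd rfl hcne
      · exact ⟨h1, h2⟩
      · exact ⟨h2, h1⟩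
      · exact absurd rfl hcne
    obtain ⟨u, hu⟩ := hab
    have hwlen : w.length = u.length + (k + 1) := by
      rw [← hu]; simp
    have hwD0 : w.getD u.length false = false := by
      rw [← hu, List.getD_append_right _ _ _ _ le_rfl]
      simp
    have hwmid : ∀ i, 1 ≤ i → i ≤ k → w.getD (u.length + i) false = true := by
      intro i hi1 hik
      rw [← hu, List.getD_append_right _ _ _ _ (by omega)]
      rw [show u.length + i - u.length = i by omega]
      rcases Nat.exists_eq_add_of_le hi1 with ⟨i', rfl⟩
      rw [show 1 + i' = i' + 1 by omega]
      simp only [List.getD_cons_succ]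
      exact repD (by omega)
    obtain ⟨qa, hqa⟩ := occOfMem hz hwa
    obtain ⟨qb, hqb⟩ := occOfMem hz hwb
    simp only [List.length_append, List.length_cons, List.length_nil] at hqa hqb
    have hWa : ∀ i < w.length, z (qa + i) = w.getD i false := by
      intro i hi
      have := hqa i (by omega)
      rwa [List.getD_append _ _ _ _ hi] at this
    have hWb : ∀ i < w.length, z (qb + i) = w.getD i false := by
      intro i hi
      have := hqb i (by omega)
      rwa [List.getD_append _ _ _ _ hi] at this
    have za_p : z (qa + u.length) = false := by
      rw [hWa u.length (by omega)]; exact hwD0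
    have zb_p : z (qb + u.length) = false := by
      rw [hWb u.length (by omega)]; exact hwD0
    have za_b : ∀ i, 1 ≤ i → i ≤ k → z (qa + u.length + i) = true := by
      intro i h1' h2'
      rw [Nat.add_assoc, hWa (u.length + i) (by omega)]
      exact hwmid i h1' h2'
    have zb_b : ∀ i, 1 ≤ i → i ≤ k → z (qb + u.length + i) = true := by
      intro i h1' h2'
      rw [Nat.add_assoc, hWb (u.length + i) (by omega)]
      exact hwmid i h1' h2'
    have za_next : z (qa + w.length) = false := by
      have := hqa w.length (by omega)
      rwa [List.getD_append_right _ _ _ _ le_rfl, Nat.sub_self] at this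
    have zb_next : z (qb + w.length) = true := by
      have := hqb w.length (by omega)
      rwa [List.getD_append_right _ _ _ _ le_rfl, Nat.sub_self] at this
    obtain ⟨hc1a, hc2a⟩ := master hz hk (qa + w.length) (qa + u.length)
      (by have := pWord_len_ge (k + (qa + w.length)); omega) za_p za_b
    obtain ⟨hc1b, hc2b⟩ := master hz hk (qb + w.length) (qb + u.length)
      (by have := pWord_len_ge (k + (qb + w.length)); omega) zb_p zb_b
    rw [show qa + u.length + k + 1 = qa + w.length by omega] at hc2a
    rw [show qb + u.length + k + 1 = qb + w.length by omega] at hc2b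
    have hbneg : ¬(qb + u.length + 1 = Lk ∨ z (qb + u.length + k - (Lk + 2 * k)) = true) := by
      intro hr
      have := hc2b.mpr hr
      rw [zb_next] at this
      exact Bool.noConfusion this
    push_neg at hbneg
    obtain ⟨hbne, hbL⟩ := hbneg
    have hc1b' := hc1b.resolve_left hbne
    obtain ⟨hgeb, hsliceb⟩ := hc1b'
    refine ⟨by intro h; rw [h] at hu; simp at hu, ?_, ⟨u, hu⟩⟩
    by_cases hlen : w.length ≤ Lk + 2 * k
    · have hBlen : (List.replicate k true ++ pWord k ++ List.replicate k true).length
          = Lk + 2 * k := by simp; omega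
      apply sufExt z (q := qb) (s := qb + u.length + k + 1 - (Lk + 2 * k))
        (fun i hi => (hWb i hi).symm) ?_ (by omega) (by rw [hBlen]; omega)
      intro i hi
      rw [hBlen] at hi
      exact (hsliceb i hi).symm
    · exfalso
      have ht : w.length - 1 - (Lk + 2 * k) < w.length := by omega
      have haor : qa + u.length + 1 = Lk ∨ z (qa + u.length + k - (Lk + 2 * k)) = true :=
        hc2a.mp (by rw [show qa + w.length = qa + u.length + k + 1 by omega] at za_next ⊢; exact za_next)
      have hane : ¬(qa + u.length + 1 = Lk) := by omega
      have haL := haor.resolve_left hane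
      have e1 : z (qa + (w.length - 1 - (Lk + 2 * k))) = true := by
        rw [show qa + (w.length - 1 - (Lk + 2 * k)) = qa + u.length + k - (Lk + 2 * k) by omega]
        exact haL
      have e2 : z (qb + (w.length - 1 - (Lk + 2 * k))) = false := by
        have : z (qb + u.length + k - (Lk + 2 * k)) = false := by
          rcases Bool.eq_false_or_eq_true (z (qb + u.length + k - (Lk + 2 * k))) with h | h
          · exact absurd h hbL
          · exact h
        rw [show qb + (w.length - 1 - (Lk + 2 * k)) = qb + u.length + k - (Lk + 2 * k) by omega]
        exact this
      rw [hWa _ ht] at e1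
      rw [hWb _ ht] at e2
      rw [e1] at e2
      exact Bool.noConfusion e2
  · rintro ⟨hne, hsuf, hab⟩
    obtain ⟨u0, hu0⟩ := hsuf
    obtain ⟨r, hr⟩ := pWord_head k hk
    refine ⟨⟨false, true, by simp, ?_, ?_⟩, hab⟩
    · -- w ++ [false]
      have hdec : pWord (k + 2)
          = (pWord (k+1) ++ [true] ++ u0) ++ (w ++ [false]) ++ r := by
        have step1 : (pWord (k+1) ++ [true] ++ u0) ++ (w ++ [false]) ++ r
            = pWord (k+1) ++ [true] ++ (u0 ++ w) ++ [false] ++ r := by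
          simp [List.append_assoc]
        rw [step1, hu0]
        rw [show k + 2 = (k+1) + 1 by omega, pWord_succ (k+1) (by omega), pWord_succ k hk,
          hr, show List.replicate (k+1) true = [true] ++ List.replicate k true by
            simp [List.replicate_succ]]
        simp [List.append_assoc]
      exact memLang hz hdec
    · -- w ++ [true]
      have hdec : pWord (k + 2)
          = (pWord k ++ u0) ++ (w ++ [true]) ++ pWord (k+1) := by
        have step1 : (pWord k ++ u0) ++ (w ++ [true]) ++ pWord (k+1)
            = pWord k ++ (u0 ++ w) ++ [true] ++ pWord (k+1) := by
          simp [List.append_assoc]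
        rw [step1, hu0]
        rw [show k + 2 = (k+1) + 1 by omega, pWord_succ (k+1) (by omega),
          show List.replicate (k+1) true = List.replicate k true ++ [true] by
            simp [List.replicate_succ'], pWord_succ k hk]
        simp [List.append_assoc]
      exact memLang hz hdec

/-- Let `z` be the fixed point of `a ↦ abab`, `b ↦ b` beginning with `a`
(equivalently, the limit of the `pWord k`, with `a = false`, `b = true`) and `Z = O(z)`.
For `k ≥ 1`, the right special factors of `L(Z)` ending with `a bᵏ` are exactly the nonempty
suffixes of `bᵏ p_k bᵏ` ending with `a bᵏ`. -/
theorem stmt9 (z : ℕ → Bool)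
    (hz : ∀ k : ℕ, ∀ i < (pWord k).length, z i = (pWord k).getD i false)
    (k : ℕ) (hk : 1 ≤ k) (w : List Bool) :
    (RightSpecial (orbitClosure z) w ∧ (false :: List.replicate k true) <:+ w) ↔
    (w ≠ [] ∧ w <:+ (List.replicate k true ++ pWord k ++ List.replicate k true) ∧
      (false :: List.replicate k true) <:+ w) := by
  exact stmt9_aux z hz k hk w
end

section
/- Let σ be the substitution a ↦ abab, b ↦ b on the alphabet {a, b}, let z be its unique infinite fixed point beginning with a (equivalently z = lim_k p_k, where p₁ = a and p_{k+1} = p_k bᵏ p_k), and let Z = O(z). Then the winning shift W(Z) has infinite coding dimension, i.e., the sums Σα for α ∈ W(Z) are unbounded. -/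
/-!
Write `a = false`, `b = true`, and let `stem g` be `p_{g+1}` without its final `a`, so that
`stem (g + 1) = stem g · a b^(g+1) · stem g` and every `stem g` is a prefix of `z`. Peeling off
the largest run shows that for `c₁ < ⋯ < cₖ < E` the word
`a b^(c₁+1) stem c₁ ⋯ a b^(cₖ+1) stem cₖ` is a suffix of `stem E`, hence occurs in `z`.
Fix `d` and rapidly growing levels `ℓ₀ < ⋯ < ℓ_d`. A branch `s ∈ {0,1}^(d+1)` reads such a
word: at level `ℓ_j` it either prolongs the current run of `b` (bit `1`) or closes it so that
the next `a` falls on `ℓ_j` (bit `0`); the `stem` forced after the closed run ends before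
`ℓ_(j+1)`, and the run lengths chosen this way increase. The prefixes of the words read at
these occurrences form a strategy tree for `Z` branching exactly at the `d + 1` levels, so
`W(Z)` contains words with `d + 1` letters `1`.
-/

open scoped BigOperators

def IsWordPrefix (w : List Bool) (y : ℕ → Bool) : Prop :=
  ∀ i < w.length, w.getD i false = y i

section IsWordPrefix

variable {y : ℕ → Bool}

theorem isWordPrefix_nil : IsWordPrefix [] y := fun _ h => absurd h (Nat.not_lt_zero _)

theorem IsWordPrefix.of_append {u v : List Bool} (h : IsWordPrefix (u ++ v) y) :
    IsWordPrefix u y := fun i hi => by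
  rw [← List.getD_append _ v _ _ hi]
  exact h i (by simp; omega)

theorem isWordPrefix_append_singleton {w : List Bool} {c : Bool} :
    IsWordPrefix (w ++ [c]) y ↔ IsWordPrefix w y ∧ c = y w.length := by
  refine ⟨fun h => ⟨h.of_append, by simpa using h w.length (by simp)⟩, ?_⟩
  rintro ⟨hw, rfl⟩ i hi
  rcases Nat.lt_or_ge i w.length with hlt | hge
  · rw [List.getD_append _ _ _ _ hlt, hw i hlt]
  · obtain rfl : i = w.length := by simp at hi; omega
    simp

theorem IsWordPrefix.apply_eq {n : ℕ} {y' : ℕ → Bool}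
    (h : IsWordPrefix (List.ofFn fun i : Fin n => y' i) y) {i : ℕ} (hi : i < n) : y' i = y i := by
  have hi' : i < (List.ofFn fun i : Fin n => y' i).length := by simpa using hi
  have := h i hi'
  rwa [List.getD_eq_getElem _ _ hi', List.getElem_ofFn] at this

end IsWordPrefix

/-- Occurrences in `x` of a binary tree of words branching exactly at the levels `ℓ 0, …, ℓ d`,
the branch `s` taking the letter `s j` at level `ℓ j`. -/
structure SplittingFamily (x : ℕ → Bool) (ℓ : ℕ → ℕ) (d : ℕ) where
  pos : (ℕ → Bool) → ℕ
  pos_congr : ∀ s s', (∀ n ≤ d, s n = s' n) → pos s = pos s'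
  apply_pos_add_level : ∀ s, ∀ j ≤ d, x (pos s + ℓ j) = s j
  apply_pos_add_eq : ∀ s s', ∀ j ≤ d, (∀ n < j, s n = s' n) →
    ∀ i < ℓ j, x (pos s + i) = x (pos s' + i)

namespace SplittingFamily

variable {x : ℕ → Bool} {ℓ : ℕ → ℕ} {d : ℕ} (S : SplittingFamily x ℓ d)

def tree : Set (List Bool) :=
  {w | ∃ s, IsWordPrefix w fun i => x (S.pos s + i)}

/-- Two branches that agree below a non-level `n` agree at `n`: their first distinct bit is
read at a level, which must then lie beyond `n`. -/
theorem apply_pos_add_eq_of_ne_level {s s' : ℕ → Bool} {n : ℕ} (hn : ∀ j ≤ d, ℓ j ≠ n)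
    (h : ∀ i < n, x (S.pos s + i) = x (S.pos s' + i)) : x (S.pos s + n) = x (S.pos s' + n) := by
  classical
  by_cases hall : ∀ k ≤ d, s k = s' k
  · rw [S.pos_congr s s' hall]
  push Not at hall
  have hex : ∃ k, s k ≠ s' k := ⟨_, hall.choose_spec.2⟩
  set j := Nat.find hex
  have hjd : j ≤ d := (Nat.find_min' hex hall.choose_spec.2).trans hall.choose_spec.1
  have hbelow : ∀ k < j, s k = s' k := fun k hk => not_not.mp (Nat.find_min hex hk)
  have hlevel : x (S.pos s + ℓ j) ≠ x (S.pos s' + ℓ j) := by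
    rw [S.apply_pos_add_level s j hjd, S.apply_pos_add_level s' j hjd]
    exact Nat.find_spec hex
  have hgt : n < ℓ j := by
    have := hn j hjd
    by_contra! hle
    exact hlevel (h _ (by omega))
  exact S.apply_pos_add_eq s s' j hjd hbelow n hgt

theorem extensions_eq_univ {w : List Bool} (hw : w ∈ S.tree) {j : ℕ} (hj : j ≤ d)
    (hlen : w.length = ℓ j) : {c | w ++ [c] ∈ S.tree} = Set.univ := by
  obtain ⟨s, hs⟩ := hw
  refine Set.eq_univ_of_forall fun c => ⟨Function.update s j c, ?_⟩
  refine isWordPrefix_append_singleton.mpr ⟨fun i hi => ?_, ?_⟩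
  · rw [hs i hi]
    refine S.apply_pos_add_eq s _ j hj (fun n hn => ?_) i (hlen ▸ hi)
    rw [Function.update_of_ne hn.ne]
  · rw [hlen, S.apply_pos_add_level _ j hj, Function.update_self]

theorem extensions_eq_singleton {w : List Bool} {s : ℕ → Bool}
    (hw : IsWordPrefix w fun i => x (S.pos s + i)) (hn : ∀ j ≤ d, ℓ j ≠ w.length) :
    {c | w ++ [c] ∈ S.tree} = {x (S.pos s + w.length)} := by
  ext c
  simp only [tree, Set.mem_ofPred_eq, Set.mem_singleton_iff, isWordPrefix_append_singleton]
  constructor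
  · rintro ⟨s', hs', rfl⟩
    exact S.apply_pos_add_eq_of_ne_level hn fun i hi => (hs' i hi).symm.trans (hw i hi)
  · rintro rfl
    exact ⟨s, hw, rfl⟩

theorem isStrategyTree :
    IsStrategyTree (orbitClosure x)
      (fun i => if i ∈ (Finset.range (d + 1)).image ℓ then 1 else 0) S.tree := by
  refine ⟨⟨fun _ => false, isWordPrefix_nil⟩, fun u v ⟨s, hs⟩ => ⟨s, hs.of_append⟩,
    fun w hw => ?_, fun y hy n => ?_⟩
  · beta_reduce
    by_cases hlev : w.length ∈ (Finset.range (d + 1)).image ℓ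
    · obtain ⟨j, hj, hjw⟩ := Finset.mem_image.mp hlev
      rw [S.extensions_eq_univ hw (Finset.mem_range_succ_iff.mp hj) hjw.symm, if_pos hlev,
        Set.ncard_univ, Nat.card_eq_fintype_card, Fintype.card_bool]
    · obtain ⟨s, hs⟩ := hw
      have hn : ∀ j ≤ d, ℓ j ≠ w.length := fun j hj he =>
        hlev (Finset.mem_image.mpr ⟨j, Finset.mem_range_succ_iff.mpr hj, he⟩)
      rw [S.extensions_eq_singleton hs hn, if_neg hlev, Set.ncard_singleton]
  · obtain ⟨s, hs⟩ := hy n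
    exact ⟨S.pos s, fun i hi => hs.apply_eq hi⟩

end SplittingFamily

namespace PWord

def stem : ℕ → List Bool
  | 0 => []
  | g + 1 => stem g ++ false :: List.replicate (g + 1) true ++ stem g

theorem pWord_succ (g : ℕ) : pWord (g + 1) = stem g ++ [false] := by
  induction g with
  | zero => rfl
  | succ g ih => simp [pWord, stem, ih]

theorem length_stem (g : ℕ) : (stem g).length + g + 3 = 3 * 2 ^ g := by
  induction g with
  | zero => rfl
  | succ g ih =>
    simp only [stem, List.length_append, List.length_cons, List.length_replicate]
    omega

theorem singleton_false_prefix_stem {g : ℕ} (hg : 1 ≤ g) : [false] <+: stem g := by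
  induction g, hg using Nat.le_induction with
  | base => exact ⟨[true], rfl⟩
  | succ g _ ih => exact ih.trans (List.prefix_append_of_prefix (List.prefix_append _ _))

theorem apply_eq_getD_stem {z : ℕ → Bool}
    (hz : ∀ k : ℕ, ∀ i < (pWord k).length, z i = (pWord k).getD i false)
    {g i : ℕ} (hi : i < (stem g).length) : z i = (stem g).getD i false := by
  rw [hz (g + 1) i (by rw [pWord_succ]; simp; omega), pWord_succ, List.getD_append _ _ _ _ hi]

/-- `runsWord [cₖ, …, c₁]` is `a b^(c₁+1) stem c₁ ⋯ a b^(cₖ+1) stem cₖ`: the list holds the run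
lengths in reverse order. -/
def runsWord : List ℕ → List Bool
  | [] => []
  | c :: G => runsWord G ++ false :: List.replicate (c + 1) true ++ stem c

theorem length_runsWord_cons (c : ℕ) (G : List ℕ) :
    (runsWord (c :: G)).length = (runsWord G).length + c + 2 + (stem c).length := by
  simp only [runsWord, List.length_append, List.length_cons, List.length_replicate]; omega

theorem runsWord_prefix_runsWord_cons (c : ℕ) (G : List ℕ) :
    runsWord G <+: runsWord (c :: G) := by
  rw [runsWord, List.append_assoc]
  exact List.prefix_append _ _

theorem runsWord_prefix_runsWord_append (H G : List ℕ) : runsWord G <+: runsWord (H ++ G) := by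
  induction H with
  | nil => exact List.prefix_refl _
  | cons c H ih => exact ih.trans (runsWord_prefix_runsWord_cons _ _)

theorem runsWord_suffix_stem : ∀ {E : ℕ} {G : List ℕ}, List.IsChain (· > ·) (E :: G) →
    runsWord G <:+ stem E
  | _, [], _ => List.nil_suffix
  | 0, c :: G, h => absurd (List.isChain_cons_cons.mp h).1 (Nat.not_lt_zero c)
  | E + 1, c :: G, h => by
    obtain ⟨hcE, hchain⟩ := List.isChain_cons_cons.mp h
    rcases Nat.lt_or_ge c E with hlt | hge
    · exact (runsWord_suffix_stem (List.isChain_cons_cons.mpr ⟨hlt, hchain⟩)).trans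
        (List.suffix_append _ _)
    · obtain rfl : c = E := by omega
      obtain ⟨t, ht⟩ := runsWord_suffix_stem hchain
      exact ⟨t, by rw [runsWord, stem, ← ht]; simp only [List.append_assoc]⟩

theorem apply_eq_getD_of_suffix_stem {z : ℕ → Bool}
    (hz : ∀ k : ℕ, ∀ i < (pWord k).length, z i = (pWord k).getD i false)
    {w : List Bool} {E : ℕ} (h : w <:+ stem E) {i : ℕ} (hi : i < w.length) :
    z ((stem E).length - w.length + i) = w.getD i false := by
  obtain ⟨t, ht⟩ := h
  have hlen : (stem E).length = t.length + w.length := by rw [← ht, List.length_append]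
  have hpos : (stem E).length - w.length + i = t.length + i := by omega
  rw [hpos, apply_eq_getD_stem hz (g := E) (by omega), ← ht,
    List.getD_append_right _ _ _ _ (by omega), Nat.add_sub_cancel_left]

def level : ℕ → ℕ
  | 0 => 3
  | j + 1 => level j + 3 * 2 ^ level j

theorem level_strictMono : StrictMono level :=
  strictMono_nat_of_lt_succ fun j => by
    have := Nat.one_le_two_pow (n := level j)
    simp only [level]; omega

/-- On the branch `s`, the run of `b`s open at level `j` goes on if `s j`, and is otherwise
closed so that the next `a` falls on level `j`. -/
def closedRuns (s : ℕ → Bool) : ℕ → List ℕ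
  | 0 => []
  | j + 1 =>
    if s j then closedRuns s j
    else (level j - (runsWord (closedRuns s j)).length - 2) :: closedRuns s j

theorem closedRuns_congr {s s' : ℕ → Bool} :
    ∀ {j : ℕ}, (∀ n < j, s n = s' n) → closedRuns s j = closedRuns s' j
  | 0, _ => rfl
  | j + 1, h => by
    rw [closedRuns, closedRuns, closedRuns_congr fun n hn => h n (by omega), h j (by omega)]

/-- The growth of `level` leaves room for the `stem` forced after a run closed at level `j`. -/
theorem closedRuns_spec (s : ℕ → Bool) (j : ℕ) :
    List.IsChain (· > ·) (closedRuns s j) ∧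
      (closedRuns s j).headD 0 + (runsWord (closedRuns s j)).length + 3 ≤ level j := by
  induction j with
  | zero => exact ⟨List.isChain_nil, le_rfl⟩
  | succ j ih =>
    obtain ⟨hchain, hle⟩ := ih
    have hlevel : level (j + 1) = level j + 3 * 2 ^ level j := rfl
    by_cases hs : s j
    · simp only [closedRuns, hs, if_true]
      exact ⟨hchain, by omega⟩
    · simp only [closedRuns, hs, Bool.false_eq_true, if_false, List.headD_cons]
      set G := closedRuns s j
      set c := level j - (runsWord G).length - 2
      have hc : c + (runsWord G).length + 2 = level j := by omega
      have hhead : ∀ y ∈ G.head?, c > y := fun y hy => by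
        obtain ⟨t, ht⟩ := List.head?_eq_some_iff.mp hy
        have : G.headD 0 = y := by rw [ht, List.headD_cons]
        omega
      have hpow : 2 ^ c ≤ 2 ^ level j := Nat.pow_le_pow_right (by norm_num) (by omega)
      have := length_stem c
      refine ⟨hchain.cons hhead, ?_⟩
      rw [length_runsWord_cons]
      omega

def branchRuns (d : ℕ) (s : ℕ → Bool) : List ℕ := level (d + 1) :: closedRuns s (d + 1)

theorem runsWord_branchRuns_suffix_stem (d : ℕ) (s : ℕ → Bool) :
    runsWord (branchRuns d s) <:+ stem (level (d + 1) + 1) := by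
  obtain ⟨hchain, hle⟩ := closedRuns_spec s (d + 1)
  refine runsWord_suffix_stem (List.isChain_cons_cons.mpr ⟨Nat.lt_succ_self _, hchain.cons ?_⟩)
  intro y hy
  obtain ⟨t, ht⟩ := List.head?_eq_some_iff.mp hy
  rw [ht, List.headD_cons] at hle
  omega

/-- The run open at level `j` is closed, with some length `c + 1`, no earlier than level `j`. -/
theorem exists_branchRuns_eq {d j : ℕ} (s : ℕ → Bool) (hj : j ≤ d + 1) :
    ∃ H c, branchRuns d s = H ++ c :: closedRuns s j ∧
      level j ≤ c + (runsWord (closedRuns s j)).length + 2 := by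
  induction hj using Nat.decreasingInduction with
  | self => exact ⟨[], level (d + 1), rfl, by omega⟩
  | of_succ j _ ih =>
    obtain ⟨H, c, hH, hc⟩ := ih
    have hlt := level_strictMono (Nat.lt_add_one j)
    by_cases hs : s j
    · simp only [closedRuns, hs, if_true] at hH hc
      exact ⟨H, c, hH, by omega⟩
    · simp only [closedRuns, hs, Bool.false_eq_true, if_false] at hH
      have := (closedRuns_spec s j).2
      exact ⟨H ++ [c], _, by rw [hH, List.append_assoc, List.singleton_append], by omega⟩

def openWord (G : List ℕ) (n : ℕ) : List Bool :=
  runsWord G ++ false :: List.replicate (n - (runsWord G).length - 1) true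

theorem length_openWord {G : List ℕ} {n : ℕ} (h : (runsWord G).length < n) :
    (openWord G n).length = n := by
  simp only [openWord, List.length_append, List.length_cons, List.length_replicate]; omega

theorem openWord_prefix_openWord {G : List ℕ} {n N : ℕ} (hn : (runsWord G).length < n)
    (h : n ≤ N) : openWord G n <+: openWord G N := by
  rw [openWord, openWord, List.prefix_append_right_inj, List.cons_prefix_cons,
    show N - (runsWord G).length - 1 = (n - (runsWord G).length - 1) + (N - n) by omega,
    List.replicate_add]
  exact ⟨rfl, List.prefix_append _ _⟩

theorem openWord_succ {G : List ℕ} {n : ℕ} (h : (runsWord G).length < n) :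
    openWord G (n + 1) = openWord G n ++ [true] := by
  rw [openWord, openWord, List.append_assoc, List.cons_append, ← List.replicate_succ',
    show n + 1 - (runsWord G).length - 1 = n - (runsWord G).length - 1 + 1 by omega]

theorem runsWord_cons (c : ℕ) (G : List ℕ) :
    runsWord (c :: G) = openWord G ((runsWord G).length + c + 2) ++ stem c := by
  rw [runsWord, openWord, show (runsWord G).length + c + 2 - (runsWord G).length - 1 = c + 1 by
    omega]

theorem openWord_append_prefix_runsWord_branchRuns {d j : ℕ} (s : ℕ → Bool) (hj : j ≤ d) :
    openWord (closedRuns s j) (level j) ++ [s j] <+: runsWord (branchRuns d s) := by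
  obtain ⟨H, c, hH, hc⟩ := exists_branchRuns_eq (d := d) (j := j + 1) s (by omega)
  have hcons : runsWord (c :: closedRuns s (j + 1)) <+: runsWord (branchRuns d s) :=
    hH ▸ runsWord_prefix_runsWord_append H _
  have hle := (closedRuns_spec s j).2
  have hlt := level_strictMono (Nat.lt_add_one j)
  by_cases hs : s j
  · simp only [closedRuns, hs, if_true] at hc hcons ⊢
    rw [← openWord_succ (by omega)]
    refine List.IsPrefix.trans ?_ hcons
    rw [runsWord_cons]
    exact (openWord_prefix_openWord (by omega) (by omega)).trans (List.prefix_append _ _)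
  · simp only [closedRuns, hs, Bool.false_eq_true, if_false] at hcons ⊢
    refine List.IsPrefix.trans ?_ ((runsWord_prefix_runsWord_cons _ _).trans hcons)
    rw [runsWord_cons, show (runsWord (closedRuns s j)).length +
      (level j - (runsWord (closedRuns s j)).length - 2) + 2 = level j by omega,
      List.prefix_append_right_inj]
    exact singleton_false_prefix_stem (by omega)

variable {z : ℕ → Bool}

def branchPos (d : ℕ) (s : ℕ → Bool) : ℕ :=
  (stem (level (d + 1) + 1)).length - (runsWord (branchRuns d s)).length

theorem apply_branchPos_add
    (hz : ∀ k : ℕ, ∀ i < (pWord k).length, z i = (pWord k).getD i false) {d j i : ℕ}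
    (s : ℕ → Bool) (hj : j ≤ d) (hi : i ≤ level j) :
    z (branchPos d s + i) = (openWord (closedRuns s j) (level j) ++ [s j]).getD i false := by
  have hlen : (openWord (closedRuns s j) (level j) ++ [s j]).length = level j + 1 := by
    have := (closedRuns_spec s j).2
    rw [List.length_append, length_openWord (by omega), List.length_singleton]
  obtain ⟨t, ht⟩ := openWord_append_prefix_runsWord_branchRuns s hj
  rw [branchPos, apply_eq_getD_of_suffix_stem hz (runsWord_branchRuns_suffix_stem d s)
    (by rw [← ht, List.length_append]; omega), ← ht, List.getD_append _ _ _ _ (by omega)]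

def splittingFamily (hz : ∀ k : ℕ, ∀ i < (pWord k).length, z i = (pWord k).getD i false)
    (d : ℕ) : SplittingFamily z level d where
  pos := branchPos d
  pos_congr s s' h := by
    rw [branchPos, branchPos, branchRuns, branchRuns,
      closedRuns_congr fun n hn => h n (Nat.lt_succ_iff.mp hn)]
  apply_pos_add_level s j hj := by
    have := (closedRuns_spec s j).2
    rw [apply_branchPos_add hz s hj le_rfl,
      List.getD_append_right _ _ _ _ (length_openWord (by omega)).le, length_openWord (by omega),
      Nat.sub_self, List.getD_cons_zero]
  apply_pos_add_eq s s' j hj h i hi := by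
    have := (closedRuns_spec s j).2
    have hi' : i < (openWord (closedRuns s j) (level j)).length := by
      rwa [length_openWord (by omega)]
    rw [apply_branchPos_add hz s hj hi.le, apply_branchPos_add hz s' hj hi.le,
      List.getD_append _ _ _ _ hi', closedRuns_congr h,
      List.getD_append _ _ _ _ (by rwa [← closedRuns_congr h])]

end PWord

/-- Let `z` be the fixed point of `a ↦ abab`, `b ↦ b` beginning with `a`
(equivalently, the limit of the `pWord k`, with `a = false`, `b = true`) and `Z = O(z)`.
Then `W(Z)` has infinite coding dimension. -/
theorem stmt10 (z : ℕ → Bool)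
    (hz : ∀ k : ℕ, ∀ i < (pWord k).length, z i = (pWord k).getD i false) :
    ¬ FiniteCodingDim (winningShift (orbitClosure z)) := by
  rintro ⟨d, hd⟩
  have hsum := hd _ ⟨_, (PWord.splittingFamily hz d).isStrategyTree⟩
    ((Finset.range (d + 1)).image PWord.level)
  rw [Finset.sum_boole, Finset.filter_true_of_mem fun _ h => h,
    Finset.card_image_of_injective _ PWord.level_strictMono.injective, Finset.card_range,
    Nat.cast_id] at hsum
  omega
end

section
/- Let C be a finite alphabet with |C| = m. If X ⊆ C* is a regular language, then the winning set W(X), viewed as a language over the alphabet {0, 1, …, m − 1}, is a regular language. Consequently, if X ⊆ C^ℕ is a sofic subshift, then its winning shift W(X), viewed as a subset of {0, 1, …, m − 1}^ℕ, is a sofic subshift. -/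
open scoped BigOperators

set_option linter.unusedSectionVars false

namespace Stmt12Aux

variable {C : Type} [Fintype C]

/-- The language accepted from state `q`. -/
def Lq {σ : Type} (M : DFA C σ) (q : σ) : Set (List C) := {w | M.evalFrom q w ∈ M.accept}

lemma Lq_quot {σ : Type} (M : DFA C σ) (q : σ) (c : C) :
    {w | c :: w ∈ Lq M q} = Lq M (M.step q c) := rfl

/-- The winning DFA over `Fin m` built from a DFA `M` over `C`. -/
def winDFA {σ : Type} (m : ℕ) (M : DFA C σ) : DFA (Fin m) (Set (Set σ)) where
  step := fun 𝒬 a => {Q' | ∃ Q ∈ 𝒬, ∃ S : σ → Finset C,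
    (∀ q ∈ Q, (S q).card = (a : ℕ) + 1) ∧
    Q' = {q' | ∃ q ∈ Q, ∃ c ∈ S q, q' = M.step q c}}
  start := {{M.start}}
  accept := {𝒬 | ∃ Q ∈ 𝒬, ∀ q ∈ Q, q ∈ M.accept}

lemma winDFA_evalFrom {σ : Type} (m : ℕ) (M : DFA C σ) (α : List (Fin m)) :
    ∀ 𝒬 : Set (Set σ),
      ((winDFA m M).evalFrom 𝒬 α ∈ (winDFA m M).accept ↔
        ∃ Q ∈ 𝒬, ∀ q ∈ Q, winningSetMem (α.map Fin.val) (Lq M q)) := by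
  induction α with
  | nil =>
    intro 𝒬
    simp only [DFA.evalFrom_nil, List.map_nil]
    exact Iff.rfl
  | cons a α ih =>
    intro 𝒬
    have hev : (winDFA m M).evalFrom 𝒬 (a :: α) =
        (winDFA m M).evalFrom ((winDFA m M).step 𝒬 a) α := rfl
    rw [hev, ih]
    simp only [List.map_cons]
    constructor
    · rintro ⟨Q', ⟨Q, hQ, S, hcard, rfl⟩, hwin⟩
      refine ⟨Q, hQ, fun q hq => ⟨S q, hcard q hq, fun c hc => ?_⟩⟩
      have := hwin (M.step q c) ⟨q, hq, c, hc, rfl⟩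
      rw [Lq_quot]
      exact this
    · rintro ⟨Q, hQ, hwin⟩
      classical
      have key : ∀ q : σ, ∃ S : Finset C,
          (q ∈ Q → S.card = (a : ℕ) + 1 ∧ ∀ c ∈ S, winningSetMem (α.map Fin.val)
            {w | c :: w ∈ Lq M q}) := by
        intro q
        by_cases hq : q ∈ Q
        · obtain ⟨S, h1, h2⟩ := hwin q hq
          exact ⟨S, fun _ => ⟨h1, h2⟩⟩
        · exact ⟨∅, fun hq' => absurd hq' hq⟩
      choose S hS using key
      refine ⟨{q' | ∃ q ∈ Q, ∃ c ∈ S q, q' = M.step q c},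
        ⟨Q, hQ, S, fun q hq => (hS q hq).1, rfl⟩, ?_⟩
      rintro q' ⟨q, hq, c, hc, rfl⟩
      have := (hS q hq).2 c hc
      rwa [Lq_quot] at this

lemma winDFA_correct {σ : Type} (m : ℕ) (M : DFA C σ) (w : List (Fin m)) :
    w ∈ (winDFA m M).accepts ↔ winningSetMem (w.map Fin.val) M.accepts := by
  rw [DFA.mem_accepts]
  show (winDFA m M).evalFrom ({{M.start}} : Set (Set σ)) w ∈ (winDFA m M).accept ↔ _
  rw [winDFA_evalFrom]
  constructor
  · rintro ⟨Q, hQ, h⟩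
    rw [Set.mem_singleton_iff] at hQ
    subst hQ
    have := h M.start rfl
    exact this
  · intro h
    exact ⟨{M.start}, rfl, fun q hq => by rw [Set.mem_singleton_iff] at hq; subst hq; exact h⟩

/-- Path language of an edge-labeled graph. -/
def pathLang {V : Type} (E : Set (V × C × V)) : Set (List C) :=
  {w | ∃ q : ℕ → V, ∀ (i : ℕ) (h : i < w.length), (q i, w.get ⟨i, h⟩, q (i + 1)) ∈ E}

lemma pathLang_pref {V : Type} (E : Set (V × C × V)) (u v : List C)
    (h : u ++ v ∈ pathLang E) : u ∈ pathLang E := by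
  obtain ⟨q, hq⟩ := h
  refine ⟨q, fun i hi => ?_⟩
  have hi' : i < (u ++ v).length := by simp; omega
  have := hq i hi'
  rwa [show (u ++ v).get ⟨i, hi'⟩ = u.get ⟨i, hi⟩ from by
    simp only [List.get_eq_getElem]; exact List.getElem_append_left hi] at this

lemma pathLang_quot {V : Type} (E : Set (V × C × V)) (c : C) (w : List C)
    (h : c :: w ∈ pathLang E) : w ∈ pathLang E := by
  obtain ⟨q, hq⟩ := h
  refine ⟨fun i => q (i + 1), fun i hi => ?_⟩
  have hi' : i + 1 < (c :: w).length := by simpa using Nat.succ_lt_succ hi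
  have := hq (i + 1) hi'
  simpa using this

/-- DFA recognizing the path language. -/
def pathDFA {V : Type} (E : Set (V × C × V)) : DFA C (Set V) where
  step := fun R c => {v' | ∃ v ∈ R, (v, c, v') ∈ E}
  start := Set.univ
  accept := {R | R.Nonempty}

lemma pathDFA_evalFrom {V : Type} (E : Set (V × C × V)) (w : List C) :
    ∀ R : Set V, ((pathDFA E).evalFrom R w).Nonempty ↔
      ∃ q : ℕ → V, q 0 ∈ R ∧ ∀ (i : ℕ) (h : i < w.length), (q i, w.get ⟨i, h⟩, q (i + 1)) ∈ E := by
  induction w with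
  | nil =>
    intro R
    simp only [DFA.evalFrom_nil]
    constructor
    · rintro ⟨v, hv⟩; exact ⟨fun _ => v, hv, fun i hi => absurd hi (by simp)⟩
    · rintro ⟨q, hq, _⟩; exact ⟨q 0, hq⟩
  | cons c w ih =>
    intro R
    have hev : (pathDFA E).evalFrom R (c :: w) =
        (pathDFA E).evalFrom ((pathDFA E).step R c) w := rfl
    rw [hev, ih]
    constructor
    · rintro ⟨q, ⟨v, hv, hE⟩, hq⟩
      refine ⟨fun n => Nat.casesOn n v q, hv, fun i hi => ?_⟩
      match i with
      | 0 => simpa using hE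
      | Nat.succ j =>
        have hj : j < w.length := by simpa using hi
        simpa using hq j hj
    · rintro ⟨q, hq0, hq⟩
      refine ⟨fun i => q (i + 1), ⟨q 0, hq0, by simpa using hq 0 (by simp)⟩, fun i hi => ?_⟩
      have hi' : i + 1 < (c :: w).length := by simpa using Nat.succ_lt_succ hi
      simpa using hq (i + 1) hi'

lemma pathDFA_correct {V : Type} (E : Set (V × C × V)) (w : List C) :
    w ∈ (pathDFA E).accepts ↔ w ∈ pathLang E := by
  rw [DFA.mem_accepts]
  show ((pathDFA E).evalFrom Set.univ w).Nonempty ↔ _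
  rw [pathDFA_evalFrom]
  constructor
  · rintro ⟨q, _, hq⟩; exact ⟨q, hq⟩
  · rintro ⟨q, hq⟩; exact ⟨q, Set.mem_univ _, hq⟩

/-- monotonicity of the winning set in the language. -/
lemma wsm_mono : ∀ (αl : List ℕ) (Y Y' : Set (List C)), Y ⊆ Y' →
    winningSetMem αl Y → winningSetMem αl Y' := by
  intro αl
  induction αl with
  | nil => intro Y Y' h hY; exact h hY
  | cons a αl ih =>
    rintro Y Y' h ⟨S, hc, hw⟩
    exact ⟨S, hc, fun c hc' => ih _ _ (fun w hw' => h hw') (hw c hc')⟩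

def PrefClosed (Y : Set (List C)) : Prop := ∀ u v : List C, u ++ v ∈ Y → u ∈ Y

lemma wsm_dropLast : ∀ (αl : List ℕ) (a : ℕ) (Y : Set (List C)), PrefClosed Y →
    winningSetMem (αl ++ [a]) Y → winningSetMem αl Y := by
  intro αl
  induction αl with
  | nil =>
    rintro a Y hY ⟨S, hc, hw⟩
    have hS : S.Nonempty := Finset.card_pos.mp (by omega)
    obtain ⟨c, hcS⟩ := hS
    have : [c] ∈ Y := hw c hcS
    exact hY [] [c] this
  | cons b αl ih =>
    rintro a Y hY ⟨S, hc, hw⟩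
    refine ⟨S, hc, fun c hc' => ih a _ ?_ (hw c hc')⟩
    intro u v huv
    exact hY (c :: u) v huv

lemma wsm_tail {V : Type} (E : Set (V × C × V)) (a : ℕ) (αl : List ℕ)
    (h : winningSetMem (a :: αl) (pathLang E)) : winningSetMem αl (pathLang E) := by
  obtain ⟨S, hc, hw⟩ := h
  obtain ⟨c, hcS⟩ := Finset.card_pos.mp (show 0 < S.card by omega)
  exact wsm_mono αl _ _ (fun w hw' => pathLang_quot E c w hw') (hw c hcS)

/-- A finite strategy tree for the word `αl` with leaves in `Y`. -/
def FinTreeP (αl : List ℕ) (Y T : Set (List C)) : Prop :=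
  [] ∈ T ∧ (∀ u v : List C, u ++ v ∈ T → u ∈ T) ∧ (∀ w ∈ T, w.length ≤ αl.length) ∧
  (∀ w ∈ T, ∀ h : w.length < αl.length, Set.ncard {c | w ++ [c] ∈ T} = αl.get ⟨w.length, h⟩ + 1) ∧
  (∀ w ∈ T, w.length = αl.length → w ∈ Y)

lemma exists_finTree : ∀ (αl : List ℕ) (Y : Set (List C)),
    winningSetMem αl Y → ∃ T : Set (List C), FinTreeP αl Y T := by
  intro αl
  induction αl with
  | nil =>
    intro Y hY
    refine ⟨{[]}, rfl, ?_, ?_, ?_, ?_⟩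
    · intro u v huv
      rw [Set.mem_singleton_iff] at huv
      obtain ⟨rfl, rfl⟩ := List.append_eq_nil_iff.mp huv
      rfl
    · intro w hw; rw [Set.mem_singleton_iff] at hw; subst hw; simp
    · intro w hw h; simp at h
    · intro w hw _; rw [Set.mem_singleton_iff] at hw; subst hw; exact hY
  | cons a αl ih =>
    rintro Y ⟨S, hcard, hw⟩
    classical
    have key : ∀ c : C, ∃ T : Set (List C),
        (c ∈ S → FinTreeP αl {w | c :: w ∈ Y} T) := by
      intro c
      by_cases hc : c ∈ S
      · obtain ⟨T, hT⟩ := ih _ (hw c hc); exact ⟨T, fun _ => hT⟩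
      · exact ⟨∅, fun hc' => absurd hc' hc⟩
    choose Tc hTc using key
    set T : Set (List C) := insert [] {l | ∃ c ∈ S, ∃ w ∈ Tc c, l = c :: w} with hTdef
    have hmem : ∀ (c : C) (w : List C), c :: w ∈ T ↔ c ∈ S ∧ w ∈ Tc c := by
      intro c w
      simp only [hTdef, Set.mem_insert_iff, Set.mem_setOf_eq]
      constructor
      · rintro (h | ⟨c', hc', w', hw', h⟩)
        · exact absurd h (by simp)
        · obtain ⟨rfl, rfl⟩ : c = c' ∧ w = w' := by
            have := h.symm
            rw [List.cons.injEq] at this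
            exact ⟨this.1.symm, this.2.symm⟩
          exact ⟨hc', hw'⟩
      · rintro ⟨hc, hw'⟩
        exact Or.inr ⟨c, hc, w, hw', rfl⟩
    refine ⟨T, Or.inl rfl, ?_, ?_, ?_, ?_⟩
    · -- prefix closed
      intro u v huv
      match u with
      | [] => exact Or.inl rfl
      | c :: u' =>
        rw [List.cons_append] at huv
        rw [hmem] at huv
        obtain ⟨hc, hu'v⟩ := huv
        have := ((hTc c hc).2.1) u' v hu'v
        exact (hmem c u').mpr ⟨hc, this⟩
    · -- lengths
      intro w hw'
      match w with
      | [] => simp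
      | c :: w' =>
        rw [hmem] at hw'
        have := (hTc c hw'.1).2.2.1 w' hw'.2
        simpa using Nat.succ_le_succ this
    · -- branching
      intro w hw' h
      match w with
      | [] =>
        have : {c | [] ++ [c] ∈ T} = (↑S : Set C) := by
          ext c
          simp only [List.nil_append, Finset.coe_sort_coe, Set.mem_setOf_eq, Finset.mem_coe]
          rw [show ([c] : List C) = c :: [] from rfl, hmem]
          constructor
          · rintro ⟨hc, _⟩; exact hc
          · intro hc; exact ⟨hc, (hTc c hc).1⟩
        rw [this, Set.ncard_coe_finset, hcard]
        simp
      | c :: w' =>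
        rw [hmem] at hw'
        obtain ⟨hc, hw2⟩ := hw'
        have hlen : w'.length < αl.length := by simpa using h
        have hset : {c' | (c :: w') ++ [c'] ∈ T} = {c' | w' ++ [c'] ∈ Tc c} := by
          ext c'
          rw [Set.mem_setOf_eq, Set.mem_setOf_eq, List.cons_append, hmem]
          exact ⟨fun h' => h'.2, fun h' => ⟨hc, h'⟩⟩
        rw [hset]
        have := (hTc c hc).2.2.2.1 w' hw2 hlen
        rw [this]
        congr 1
    · -- leaves
      intro w hw' hlen
      match w with
      | [] => simp at hlen
      | c :: w' =>
        rw [hmem] at hw'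
        exact (hTc c hw'.1).2.2.2.2 w' hw'.2 (by simpa using hlen)

lemma wsm_of_tree : ∀ (αl : List ℕ) (Y T : Set (List C)), [] ∈ T →
    (∀ w ∈ T, ∀ h : w.length < αl.length,
      Set.ncard {c | w ++ [c] ∈ T} = αl.get ⟨w.length, h⟩ + 1) →
    (∀ w ∈ T, w.length = αl.length → w ∈ Y) → winningSetMem αl Y := by
  intro αl
  induction αl with
  | nil => intro Y T h0 _ hleaf; exact hleaf [] h0 rfl
  | cons a αl ih =>
    intro Y T h0 hbr hleaf
    classical
    have hfin : {c : C | [] ++ [c] ∈ T}.Finite := Set.toFinite _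
    have hcard := hbr [] h0 (by simp)
    refine ⟨hfin.toFinset, ?_, ?_⟩
    · rw [← Set.ncard_eq_toFinset_card _ hfin, hcard]; rfl
    · intro c hc
      rw [Set.Finite.mem_toFinset] at hc
      simp only [List.nil_append, Set.mem_setOf_eq] at hc
      refine ih _ {w | c :: w ∈ T} hc ?_ ?_
      · intro w hwT h
        have hcw : (c :: w) ∈ T := hwT
        have := hbr (c :: w) hcw (by simpa using Nat.succ_lt_succ h)
        rw [show {c' | (c :: w) ++ [c'] ∈ T} = {c' | w ++ [c'] ∈ {w | c :: w ∈ T}} from rfl] at this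
        rw [this]; rfl
      · intro w hwT hlen
        exact hleaf (c :: w) hwT (by simpa using hlen)

lemma getD_of_prefix {u v : List C} (d : C) (h : u <+: v) {n : ℕ} (hn : n < u.length) :
    v.getD n d = u.getD n d := by
  obtain ⟨t, rfl⟩ := h
  exact List.getD_append u t d n hn

/-- every node of a strategy tree extends to an infinite branch in `X`. -/
lemma node_branch {X : Set (ℕ → C)} {α : ℕ → ℕ} {T : Set (List C)}
    (hT : IsStrategyTree X α T) (w : List C) (hw : w ∈ T) :
    ∃ y : ℕ → C, y ∈ X ∧ (List.ofFn fun i : Fin w.length => y i) = w := by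
  classical
  obtain ⟨h0, hpc, hbr, hbranch⟩ := hT
  have hCne : Nonempty C := by
    have := hbr [] h0
    obtain ⟨c, _⟩ := Set.nonempty_of_ncard_ne_zero (by rw [this]; simp)
    exact ⟨c⟩
  have hext : ∀ u : List C, ∃ c : C, u ∈ T → u ++ [c] ∈ T := by
    intro u
    by_cases hu : u ∈ T
    · obtain ⟨c, hc⟩ := Set.nonempty_of_ncard_ne_zero (s := {c : C | u ++ [c] ∈ T})
        (by rw [hbr u hu]; simp)
      exact ⟨c, fun _ => hc⟩
    · exact ⟨Classical.arbitrary C, fun h => absurd h hu⟩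
  choose ext hextT using hext
  set W : ℕ → List C := fun k => Nat.rec w (fun _ u => u ++ [ext u]) k with hW
  have hWsucc : ∀ k, W (k + 1) = W k ++ [ext (W k)] := fun k => rfl
  have hWT : ∀ k, W k ∈ T := by
    intro k; induction k with
    | zero => exact hw
    | succ k ih => rw [hWsucc]; exact hextT _ ih
  have hWlen : ∀ k, (W k).length = w.length + k := by
    intro k; induction k with
    | zero => rfl
    | succ k ih => rw [hWsucc]; simp [ih]; omega
  have hWpref : ∀ k j, W k <+: W (k + j) := by
    intro k j; induction j with
    | zero => exact List.prefix_refl _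
    | succ j ih => exact ih.trans ⟨[ext (W (k + j))], (hWsucc (k + j)).symm⟩
  have hWmono : ∀ k k', k ≤ k' → W k <+: W k' := by
    intro k k' hk
    obtain ⟨j, rfl⟩ := Nat.exists_eq_add_of_le hk
    exact hWpref k j
  set d : C := Classical.arbitrary C with hd
  set y : ℕ → C := fun n => (W (n + 1)).getD n d with hy
  have key : ∀ k n, n < w.length + k → (W k).getD n d = y n := by
    intro k n hn
    show (W k).getD n d = (W (n + 1)).getD n d
    rcases le_total (n + 1) k with h | h
    · exact getD_of_prefix d (hWmono _ _ h) (show n < (W (n + 1)).length by rw [hWlen (n + 1)]; omega)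
    · exact (getD_of_prefix d (hWmono _ _ h)
        (show n < (W k).length by rw [hWlen k]; omega)).symm
  have prefix_eq : ∀ n, (List.ofFn fun i : Fin n => y i) = (W n).take n := by
    intro n
    apply List.ext_getElem
    · simp [hWlen n]
    · intro i h1 h2
      simp only [List.getElem_ofFn, List.getElem_take]
      have hi : i < n := by simpa using h1
      have hi2 : i < (W n).length := by rw [hWlen n]; omega
      rw [← List.getD_eq_getElem (W n) d hi2]
      exact (key n i (by omega)).symm
  have prefT : ∀ n, (List.ofFn fun i : Fin n => y i) ∈ T := by
    intro n
    rw [prefix_eq]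
    exact hpc _ ((W n).drop n) (by rw [List.take_append_drop]; exact hWT n)
  refine ⟨y, hbranch y prefT, ?_⟩
  rw [prefix_eq]
  have hWw : ∀ k, ∃ s, W k = w ++ s := by
    intro k; induction k with
    | zero => refine ⟨[], ?_⟩; rw [List.append_nil]; rfl
    | succ k ih =>
      obtain ⟨s, hs⟩ := ih
      exact ⟨s ++ [ext (W k)], by rw [hWsucc, hs, List.append_assoc]⟩
  obtain ⟨s, hs⟩ := hWw w.length
  rw [hs, List.take_left]

lemma mem_pathLang_of_run {V : Type} (E : Set (V × C × V)) (y : ℕ → C) (p : ℕ → V)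
    (hp : ∀ n, (p n, y n, p (n + 1)) ∈ E) (n : ℕ) :
    (List.ofFn fun i : Fin n => y i) ∈ pathLang E := by
  refine ⟨p, fun i hi => ?_⟩
  have hi' : i < n := by simpa using hi
  simpa [List.get_ofFn] using hp i

lemma paths_compact {V : Type} [Fintype V] (E : Set (V × C × V)) (y : ℕ → C)
    (h : ∀ n, (List.ofFn fun i : Fin n => y i) ∈ pathLang E) :
    ∃ p : ℕ → V, ∀ n, (p n, y n, p (n + 1)) ∈ E := by
  letI : TopologicalSpace V := ⊥
  haveI : DiscreteTopology V := ⟨rfl⟩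
  have hVne : Nonempty V := by
    obtain ⟨q, _⟩ := h 0
    exact ⟨q 0⟩
  set K : ℕ → Set (ℕ → V) := fun n => ⋂ (i : ℕ) (_ : i < n), {q | (q i, y i, q (i + 1)) ∈ E}
    with hK
  have hmemK : ∀ q n, q ∈ K n ↔ ∀ i < n, (q i, y i, q (i + 1)) ∈ E := by
    intro q n; simp [hK]
  have hdec : ∀ n, K (n + 1) ⊆ K n := by
    intro n q hq
    rw [hmemK] at hq ⊢
    exact fun i hi => hq i (by omega)
  have hne : ∀ n, (K n).Nonempty := by
    intro n
    obtain ⟨q, hq⟩ := h n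
    refine ⟨q, (hmemK q n).mpr fun i hi => ?_⟩
    have hi' : i < (List.ofFn fun i : Fin n => y i).length := by simpa using hi
    have := hq i hi'
    simpa [List.get_ofFn] using this
  have hcl : ∀ n, IsClosed (K n) := by
    intro n
    refine isClosed_iInter fun i => isClosed_iInter fun _ => ?_
    have : {q : ℕ → V | (q i, y i, q (i + 1)) ∈ E} =
        (fun q : ℕ → V => (q i, q (i + 1))) ⁻¹' {p | (p.1, y i, p.2) ∈ E} := rfl
    rw [this]
    exact (isClosed_discrete _).preimage ((continuous_apply i).prodMk (continuous_apply (i + 1)))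
  have := IsCompact.nonempty_iInter_of_sequence_nonempty_isCompact_isClosed K hdec hne
    ((hcl 0).isCompact) hcl
  obtain ⟨q, hq⟩ := this
  rw [Set.mem_iInter] at hq
  exact ⟨q, fun n => (hmemK q (n + 1)).mp (hq (n + 1)) n (by omega)⟩

lemma winningShift_iff {V : Type} [Fintype V] (E : Set (V × C × V)) (α : ℕ → ℕ) :
    (α ∈ winningShift {x : ℕ → C | ∃ p : ℕ → V, ∀ n, (p n, x n, p (n + 1)) ∈ E}) ↔
    ∀ n, winningSetMem (List.ofFn fun i : Fin n => α i) (pathLang E) := by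
  classical
  constructor
  · rintro ⟨T, hT⟩ n
    obtain ⟨h0, hpc, hbr, hbranch⟩ := hT
    refine wsm_of_tree _ _ T h0 ?_ ?_
    · intro w hw h
      rw [hbr w hw]
      congr 1
      simp [List.get_ofFn]
    · intro w hw _
      obtain ⟨y, hy, hpref⟩ := node_branch (X := {x : ℕ → C | ∃ p : ℕ → V,
        ∀ n, (p n, x n, p (n + 1)) ∈ E}) ⟨h0, hpc, hbr, hbranch⟩ w hw
      obtain ⟨p, hp⟩ := hy
      have := mem_pathLang_of_run E y p hp w.length
      rwa [hpref] at this
  · intro hall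
    set P := pathLang E with hP
    set K : ℕ → Set (List C → Bool) := fun n =>
      (({f | f [] = true} ∩
       (⋂ (u : List C), ⋂ (v : List C),
          {f | u.length + v.length ≤ n → f (u ++ v) = true → f u = true})) ∩
       (⋂ w : List C,
          {f | f w = true → w.length < n → Set.ncard {c | f (w ++ [c]) = true} = α w.length + 1})) ∩
       (⋂ w : List C, {f | f w = true → w.length = n → w ∈ P}) with hK
    have hmemK : ∀ (f : List C → Bool) n, f ∈ K n ↔
        (f [] = true ∧
         (∀ u v : List C, u.length + v.length ≤ n → f (u ++ v) = true → f u = true) ∧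
         (∀ w : List C, f w = true → w.length < n →
            Set.ncard {c | f (w ++ [c]) = true} = α w.length + 1) ∧
         (∀ w : List C, f w = true → w.length = n → w ∈ P)) := by
      intro f n
      simp only [hK, Set.mem_inter_iff, Set.mem_iInter, Set.mem_setOf_eq]
      tauto
    have hdec : ∀ n, K (n + 1) ⊆ K n := by
      intro n f hf
      rw [hmemK] at hf ⊢
      obtain ⟨h1, h2, h3, h4⟩ := hf
      refine ⟨h1, fun u v hl => h2 u v (by omega), fun w hw hl => h3 w hw (by omega), ?_⟩
      intro w hw hl
      have hbr := h3 w hw (by omega)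
      obtain ⟨c, hc⟩ := Set.nonempty_of_ncard_ne_zero (s := {c : C | f (w ++ [c]) = true})
        (by rw [hbr]; simp)
      have : w ++ [c] ∈ P := h4 (w ++ [c]) hc (by simp [hl])
      exact pathLang_pref E w [c] this
    have hne : ∀ n, (K n).Nonempty := by
      intro n
      obtain ⟨T, hT1, hT2, hT3, hT4, hT5⟩ := exists_finTree _ _ (hall n)
      refine ⟨fun w => if w ∈ T then true else false, ?_⟩
      have hf : ∀ w, ((if w ∈ T then true else false) = true) ↔ w ∈ T := by
        intro w; by_cases h : w ∈ T <;> simp [h]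
      rw [hmemK]
      refine ⟨(hf []).mpr hT1, fun u v _ hm => (hf u).mpr (hT2 u v ((hf _).mp hm)), ?_, ?_⟩
      · intro w hw hl
        have hw' := (hf w).mp hw
        have hl' : w.length < (List.ofFn fun i : Fin n => α i).length := by simpa using hl
        have := hT4 w hw' hl'
        rw [show {c | (if w ++ [c] ∈ T then true else false) = true} = {c | w ++ [c] ∈ T}
          from Set.ext fun c => hf (w ++ [c]), this]
        congr 1
        simp [List.get_ofFn]
      · intro w hw hl
        exact hT5 w ((hf w).mp hw) (by simpa using hl)
    have hcl : ∀ n, IsClosed (K n) := by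
      intro n
      refine IsClosed.inter (IsClosed.inter (IsClosed.inter ?_ ?_) ?_) ?_
      · have : {f : List C → Bool | f [] = true} =
            (fun f : List C → Bool => f []) ⁻¹' {b | b = true} := rfl
        rw [this]
        exact (isClosed_discrete _).preimage (continuous_apply _)
      · refine isClosed_iInter fun u => isClosed_iInter fun v => ?_
        have : {f : List C → Bool | u.length + v.length ≤ n → f (u ++ v) = true → f u = true} =
            (fun f : List C → Bool => (f (u ++ v), f u)) ⁻¹'
              {p : Bool × Bool | u.length + v.length ≤ n → p.1 = true → p.2 = true} := rfl
        rw [this]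
        exact (isClosed_discrete _).preimage
          ((continuous_apply _).prodMk (continuous_apply _))
      · refine isClosed_iInter fun w => ?_
        have : {f : List C → Bool | f w = true → w.length < n →
              Set.ncard {c | f (w ++ [c]) = true} = α w.length + 1} =
            (fun f : List C → Bool => (f w, fun c : C => f (w ++ [c]))) ⁻¹'
              {p : Bool × (C → Bool) | p.1 = true → w.length < n →
                Set.ncard {c | p.2 c = true} = α w.length + 1} := rfl
        rw [this]
        exact (isClosed_discrete _).preimage
          ((continuous_apply _).prodMk (continuous_pi fun c => continuous_apply _))
      · refine isClosed_iInter fun w => ?_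
        have : {f : List C → Bool | f w = true → w.length = n → w ∈ P} =
            (fun f : List C → Bool => f w) ⁻¹'
              {b : Bool | b = true → w.length = n → w ∈ P} := rfl
        rw [this]
        exact (isClosed_discrete _).preimage (continuous_apply _)
    obtain ⟨f, hfmem⟩ := IsCompact.nonempty_iInter_of_sequence_nonempty_isCompact_isClosed
      K hdec hne ((hcl 0).isCompact) hcl
    rw [Set.mem_iInter] at hfmem
    have hf : ∀ n, (f ∈ K n) := hfmem
    set T : Set (List C) := {w | f w = true} with hT
    have hTP : ∀ w ∈ T, w ∈ P := by
      intro w hw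
      exact ((hmemK f w.length).mp (hf w.length)).2.2.2 w hw rfl
    refine ⟨T, ((hmemK f 0).mp (hf 0)).1, ?_, ?_, ?_⟩
    · intro u v huv
      exact ((hmemK f (u.length + v.length)).mp (hf (u.length + v.length))).2.1 u v
        (by simp) huv
    · intro w hw
      exact ((hmemK f (w.length + 1)).mp (hf (w.length + 1))).2.2.1 w hw (by omega)
    · intro y hy
      have hyP : ∀ n, (List.ofFn fun i : Fin n => y i) ∈ P := by
        intro n
        have := hTP _ (hy n)
        exact this
      obtain ⟨p, hp⟩ := paths_compact E y (by simpa [hP] using hyP)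
      exact ⟨p, hp⟩

lemma ofFn_succ_append {m : ℕ} (γ : ℕ → Fin m) (n : ℕ) :
    (List.ofFn fun i : Fin (n + 1) => γ i) = (List.ofFn fun i : Fin n => γ i) ++ [γ n] := by
  rw [List.ofFn_succ', List.concat_eq_append]
  rfl

end Stmt12Aux

open Stmt12Aux

/-- If `X` is a regular language over a finite alphabet of size `m`, then
the winning set `W(X)`, viewed over the alphabet `{0, …, m-1}`, is regular; and if `X` is a
sofic subshift, then the winning shift `W(X)`, viewed in `{0, …, m-1}^ℕ`, is sofic. -/
theorem stmt12 {C : Type} [Fintype C] (m : ℕ) (hm : Fintype.card C = m) :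
    (∀ X : Set (List C), IsRegularLang X →
      IsRegularLang { α : List (Fin m) | winningSetMem (α.map Fin.val) X }) ∧
    (∀ X : Set (ℕ → C), IsSofic X →
      IsSofic { β : ℕ → Fin m | (fun n => (β n : ℕ)) ∈ winningShift X }) := by
  constructor
  · rintro X ⟨σ, iσ, M, hM⟩
    refine ⟨Set (Set σ), Fintype.ofFinite _, winDFA m M, fun w => ?_⟩
    rw [winDFA_correct]
    have hacc : M.accepts = X := Set.ext hM
    rw [hacc]
    rfl
  · rintro X ⟨V, iV, E, hXeq⟩
    classical
    set D := winDFA (C := C) m (pathDFA E) with hDdef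
    have hD : ∀ w : List (Fin m), w ∈ D.accepts ↔ winningSetMem (w.map Fin.val) (pathLang E) := by
      intro w
      rw [hDdef, winDFA_correct]
      have hPe : (pathDFA (C := C) E).accepts = pathLang E :=
        Set.ext fun w => pathDFA_correct E w
      rw [hPe]
    set LW : Set (List (Fin m)) := {w | winningSetMem (w.map Fin.val) (pathLang E)} with hLW
    have hDL : ∀ w, D.eval w ∈ D.accept ↔ w ∈ LW := by
      intro w
      rw [← DFA.mem_accepts]
      exact hD w
    refine ⟨Set (Set (Set V)), Fintype.ofFinite _,
      {t | t.2.2 = D.step t.1 t.2.1 ∧ ∃ u : List (Fin m), D.eval u = t.1 ∧ u ++ [t.2.1] ∈ LW},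
      ?_⟩
    ext β
    simp only [Set.mem_setOf_eq]
    rw [hXeq, winningShift_iff E (fun n => ((β n : ℕ)))]
    have hmap : ∀ n : ℕ, (List.ofFn fun i : Fin n => β i).map Fin.val =
        List.ofFn fun i : Fin n => ((β i : ℕ)) := by
      intro n; rw [List.map_ofFn]; rfl
    constructor
    · intro hall
      refine ⟨fun n => D.eval (List.ofFn fun i : Fin n => β i), fun n => ⟨?_, ?_⟩⟩
      · show D.eval (List.ofFn fun i : Fin (n + 1) => β i) = _
        rw [ofFn_succ_append (fun k => β k) n]
        rw [DFA.eval, DFA.evalFrom_append_singleton]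
      · refine ⟨List.ofFn fun i : Fin n => β i, rfl, ?_⟩
        show _ ∈ LW
        rw [hLW, Set.mem_setOf_eq, ← ofFn_succ_append (fun k => β k) n, hmap]
        exact hall (n + 1)
    · rintro ⟨p, hp⟩
      have hpc' : ∀ (u : List (Fin m)) (a : Fin m), u ++ [a] ∈ LW → u ∈ LW := by
        intro u a h
        rw [hLW, Set.mem_setOf_eq] at h ⊢
        rw [List.map_append] at h
        exact wsm_dropLast (u.map Fin.val) (a : ℕ) _ (fun x y => pathLang_pref E x y) h
      have hdropleft : ∀ u w : List (Fin m), u ++ w ∈ LW → w ∈ LW := by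
        intro u
        induction u with
        | nil => intro w h; simpa using h
        | cons a u ih =>
          intro w h
          rw [hLW, Set.mem_setOf_eq, List.cons_append, List.map_cons] at h
          exact ih w (wsm_tail E _ _ h)
      have main : ∀ k n : ℕ, ∃ u : List (Fin m),
          D.eval u = p n ∧ u ++ (List.ofFn fun i : Fin k => β (n + i)) ∈ LW := by
        intro k
        induction k with
        | zero =>
          intro n
          obtain ⟨hstep, u, hu, hmem⟩ := hp n
          exact ⟨u, hu, by simpa using hpc' u (β n) hmem⟩
        | succ k ih =>
          intro n
          obtain ⟨hstep, u, hu, hmem⟩ := hp n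
          obtain ⟨u', hu', hmem'⟩ := ih (n + 1)
          refine ⟨u, hu, ?_⟩
          have hseg : (List.ofFn fun i : Fin (k + 1) => β (n + i)) =
              β n :: (List.ofFn fun i : Fin k => β (n + 1 + i)) := by
            rw [List.ofFn_succ]
            congr 1
            have : (fun i : Fin k => β (n + ↑(Fin.succ i))) =
                fun i : Fin k => β (n + 1 + ↑i) := by
              funext i
              congr 1
              simp [Fin.val_succ]
              omega
            rw [this]
          rw [hseg, ← List.singleton_append, ← List.append_assoc]
          rw [← hDL]
          rw [DFA.eval, DFA.evalFrom_of_append]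
          have h1 : D.evalFrom D.start (u ++ [β n]) = p (n + 1) := by
            rw [DFA.evalFrom_append_singleton]
            have : D.evalFrom D.start u = p n := hu
            rw [this, ← hstep]
          rw [h1, ← hu', DFA.eval, ← DFA.evalFrom_of_append]
          exact (hDL _).mpr hmem'
      intro n
      obtain ⟨u, hu, hmem⟩ := main n 0
      have := hdropleft u _ hmem
      simp only [Nat.zero_add] at this
      rw [hLW, Set.mem_setOf_eq, hmap] at this
      exact this
end
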